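/- arXiv:quant-ph/9809010 — 6 statements merged into one kernel-verified Lean document; each statement's English description precedes it below -/
import Mathlib

section
/- For any quantum operation A with operator decomposition {Aᵢ} (i = 1,...,r) and any density operator ρ, there exists another operator decomposition {Bᵢ} of A (related to {Aᵢ} by an r×r unitary matrix, Bᵢ = Σⱼ uᵢⱼ Aⱼ) such that F_e(ρ, A) = |tr(B₁ ρ)|², i.e., tr(Bⱼ ρ) = 0 for all j ≥ 2. -/
/-!
The numbers `tᵢ = tr(Aᵢ ρ)` transform as a vector under the change of decomposition:
`tr(Bᵢ ρ) = (u t)ᵢ`. So it suffices to find a unitary `u` rotating `t` onto `‖t‖ e₀`, and the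
change-of-basis matrix to any orthonormal basis whose first vector is `t / ‖t‖` does this.
Then `F_e(ρ, A) = ‖t‖² = |tr(B₀ ρ)|²` and `tr(Bⱼ ρ) = 0` for `j ≠ 0`.
-/

open Module Matrix

section Unitary

variable {𝕜 E ι : Type*} [RCLike 𝕜] [NormedAddCommGroup E] [InnerProductSpace 𝕜 E]
  [FiniteDimensional 𝕜 E] [Fintype ι]

theorem exists_orthonormalBasis_apply_eq (hcard : finrank 𝕜 E = Fintype.card ι) {x : E}
    (hx : ‖x‖ = 1) (i₀ : ι) : ∃ b : OrthonormalBasis ι 𝕜 E, b i₀ = x := by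
  have hortho : Orthonormal 𝕜 (({i₀} : Set ι).domRestrict fun _ => x) :=
    ⟨fun _ => hx, fun i j hij => absurd (Subsingleton.elim i j) hij⟩
  obtain ⟨b, hb⟩ := hortho.exists_orthonormalBasis_extension_of_card_eq hcard
  exact ⟨b, hb i₀ rfl⟩

variable [DecidableEq ι]

theorem Matrix.exists_mem_unitaryGroup_mulVec_eq_single (v : ι → 𝕜) (i₀ : ι) :
    ∃ u ∈ Matrix.unitaryGroup ι 𝕜, u *ᵥ v = Pi.single i₀ (‖WithLp.toLp 2 v‖ : 𝕜) := by
  obtain rfl | hv := eq_or_ne v 0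
  · exact ⟨1, one_mem _, by simp⟩
  have hw : WithLp.toLp 2 v ≠ 0 := by simpa using hv
  obtain ⟨b, hb⟩ := exists_orthonormalBasis_apply_eq (E := EuclideanSpace 𝕜 ι)
    finrank_euclideanSpace (norm_smul_inv_norm (𝕜 := 𝕜) hw) i₀
  have hw_eq : WithLp.toLp 2 v = (‖WithLp.toLp 2 v‖ : 𝕜) • b i₀ := by
    rw [hb, smul_smul, mul_inv_cancel₀ (by simpa using hw), one_smul]
  refine ⟨b.toBasis.toMatrix (EuclideanSpace.basisFun ι 𝕜).toBasis,
    b.toMatrix_orthonormalBasis_mem_unitary (EuclideanSpace.basisFun ι 𝕜), ?_⟩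
  calc b.toBasis.toMatrix (EuclideanSpace.basisFun ι 𝕜).toBasis *ᵥ v
      = b.repr (WithLp.toLp 2 v) :=
        (EuclideanSpace.basisFun ι 𝕜).toBasis.toMatrix_mulVec_repr b.toBasis (WithLp.toLp 2 v)
    _ = Pi.single i₀ (‖WithLp.toLp 2 v‖ : 𝕜) := by
      conv_lhs => rw [hw_eq, map_smul, b.repr_self]
      ext i
      simp [Pi.single_apply, RCLike.real_smul_eq_coe_mul]

end Unitary

theorem Matrix.trace_sum_smul_mul {R n ι : Type*} [CommSemiring R] [Fintype n] [Fintype ι]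
    (u : Matrix ι ι R) (A : ι → Matrix n n R) (ρ : Matrix n n R) (i : ι) :
    ((∑ j, u i j • A j) * ρ).trace = (u *ᵥ fun j => (A j * ρ).trace) i := by
  simp only [Finset.sum_mul, trace_sum, smul_mul, trace_smul, smul_eq_mul]
  rfl

open scoped ComplexOrder in
theorem stmt_3_general {d r : ℕ} (A : Fin (r + 1) → Matrix (Fin d) (Fin d) ℂ)
    (ρ : Matrix (Fin d) (Fin d) ℂ) :
    ∃ (u : Matrix (Fin (r + 1)) (Fin (r + 1)) ℂ)
      (B : Fin (r + 1) → Matrix (Fin d) (Fin d) ℂ),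
      u ∈ Matrix.unitaryGroup (Fin (r + 1)) ℂ ∧
      (∀ i, B i = ∑ j, u i j • A j) ∧
      (∑ i, ‖(A i * ρ).trace‖ ^ 2 = ‖(B 0 * ρ).trace‖ ^ 2) ∧
      (∀ j, j ≠ 0 → (B j * ρ).trace = 0) := by
  obtain ⟨u, hu, hut⟩ := exists_mem_unitaryGroup_mulVec_eq_single (fun j => (A j * ρ).trace) 0
  refine ⟨u, fun i => ∑ j, u i j • A j, hu, fun _ => rfl, ?_, fun j hj => ?_⟩
  · rw [trace_sum_smul_mul, hut, Pi.single_eq_same, RCLike.norm_ofReal, sq_abs,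
      EuclideanSpace.norm_sq_eq]
  · rw [trace_sum_smul_mul, hut, Pi.single_eq_of_ne hj]

open scoped ComplexOrder in
/-- For any quantum operation with operator decomposition `{Aᵢ}` and any density operator
`ρ`, there is another decomposition `{Bᵢ}`, related to `{Aᵢ}` by a unitary matrix
`Bᵢ = Σⱼ uᵢⱼ Aⱼ`, such that `F_e(ρ, A) = |tr(B₁ρ)|²`, i.e. `tr(Bⱼρ) = 0` for `j ≥ 2`. -/
theorem stmt_3 {d r : ℕ} (A : Fin (r + 1) → Matrix (Fin d) (Fin d) ℂ)
    (ρ : Matrix (Fin d) (Fin d) ℂ) (hρ : ρ.PosSemidef) (htr : ρ.trace = 1) :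
    ∃ (u : Matrix (Fin (r + 1)) (Fin (r + 1)) ℂ)
      (B : Fin (r + 1) → Matrix (Fin d) (Fin d) ℂ),
      u ∈ Matrix.unitaryGroup (Fin (r + 1)) ℂ ∧
      (∀ i, B i = ∑ j, u i j • A j) ∧
      (∑ i, ‖(A i * ρ).trace‖ ^ 2 = ‖(B 0 * ρ).trace‖ ^ 2) ∧
      (∀ j, j ≠ 0 → (B j * ρ).trace = 0) :=
  stmt_3_general A ρ
end

section
/- Entanglement fidelity is continuous in the input operator: |F_e(B + Δ, A) - F_e(B, A)| ≤ (tr|Δ|)² + 2 tr|Δ|, where |Δ| = √(Δ†Δ). -/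
/-!
Write `F_e(M, A) = ‖v M‖²` with `v M = (tr (Aᵢ M))ᵢ ∈ ℓ²` (`krausTraceVec`), additive in `M`.
For Hermitian `M = ∑ⱼ λⱼ uⱼ uⱼ*` one has `v M = ∑ⱼ λⱼ (⟪uⱼ, Aᵢ uⱼ⟫)ᵢ`, and by Cauchy–Schwarz each
of these vectors has squared norm at most `∑ᵢ ‖Aᵢ uⱼ‖² = ⟪uⱼ, (∑ᵢ Aᵢ* Aᵢ) uⱼ⟫ ≤ 1`. Hence
`‖v M‖ ≤ ∑ⱼ |λⱼ| = tr |M|`, so that `‖v B‖ ≤ tr B ≤ 1` and `‖v Δ‖ ≤ tr |Δ|`, and the claim follows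
from `|‖a + b‖² - ‖a‖²| ≤ ‖b‖ (2 ‖a‖ + ‖b‖)`.
-/

open Matrix

open scoped ComplexOrder in
/-- The square root of a positive semidefinite matrix, as `Matrix.PosSemidef.sqrt` was defined
in Mathlib (December 2024); it has since been removed. -/
noncomputable def Matrix.PosSemidef.sqrt {n 𝕜 : Type*} [Fintype n] [RCLike 𝕜] [DecidableEq n]
    {A : Matrix n n 𝕜} (hA : A.PosSemidef) : Matrix n n 𝕜 :=
  hA.1.eigenvectorUnitary.1 * diagonal ((↑) ∘ (√·) ∘ hA.1.eigenvalues) *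
    (star hA.1.eigenvectorUnitary : Matrix n n 𝕜)

open scoped ComplexOrder InnerProductSpace

lemma abs_norm_add_sq_sub_norm_sq_le {E : Type*} [SeminormedAddCommGroup E] (a b : E) :
    |‖a + b‖ ^ 2 - ‖a‖ ^ 2| ≤ ‖b‖ * (2 * ‖a‖ + ‖b‖) := by
  have hdiff : |‖a + b‖ - ‖a‖| ≤ ‖b‖ := by simpa using abs_norm_sub_norm_le (a + b) a
  have hsum : ‖a + b‖ + ‖a‖ ≤ 2 * ‖a‖ + ‖b‖ := by linarith [norm_add_le a b]
  calc |‖a + b‖ ^ 2 - ‖a‖ ^ 2| = |‖a + b‖ - ‖a‖| * (‖a + b‖ + ‖a‖) := by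
        rw [sq_sub_sq, abs_mul, abs_of_nonneg (by positivity : 0 ≤ ‖a + b‖ + ‖a‖), mul_comm]
    _ ≤ ‖b‖ * (2 * ‖a‖ + ‖b‖) := by gcongr

namespace Matrix

variable {𝕜 n : Type*} [RCLike 𝕜] [Fintype n] [DecidableEq n]

lemma IsHermitian.trace_cfc {A : Matrix n n 𝕜} (hA : A.IsHermitian) (f : ℝ → ℝ) :
    (cfc f A).trace = ∑ i, (f (hA.eigenvalues i) : 𝕜) := by
  rw [hA.cfc_eq, IsHermitian.cfc, Unitary.conjStarAlgAut_apply, trace_mul_cycle,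
    Unitary.coe_star_mul_self, one_mul, trace_diagonal]
  rfl

open scoped MatrixOrder in
lemma PosSemidef.sqrt_eq_cfcSqrt {A : Matrix n n 𝕜} (hA : A.PosSemidef) :
    hA.sqrt = CFC.sqrt A := by
  rw [CFC.sqrt_eq_real_sqrt A hA.nonneg, cfcₙ_eq_cfc, hA.1.cfc_eq]
  rfl

open scoped MatrixOrder in
lemma IsHermitian.trace_sqrt_conjTranspose_mul_self {A : Matrix n n 𝕜} (hA : A.IsHermitian) :
    (posSemidef_conjTranspose_mul_self A).sqrt.trace = ∑ i, ((|hA.eigenvalues i| : ℝ) : 𝕜) := by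
  rw [PosSemidef.sqrt_eq_cfcSqrt, ← star_eq_conjTranspose, ← CFC.abs, CFC.abs_eq_cfc_norm A hA,
    hA.trace_cfc]
  rfl

lemma PosSemidef.sum_abs_eigenvalues_eq_re_trace {A : Matrix n n 𝕜} (hA : A.PosSemidef) :
    ∑ i, |hA.1.eigenvalues i| = RCLike.re A.trace := by
  simp_rw [hA.1.trace_eq_sum_eigenvalues, map_sum, RCLike.ofReal_re,
    abs_of_nonneg (hA.eigenvalues_nonneg _)]

lemma trace_toEuclideanLin (M : Matrix n n 𝕜) :
    LinearMap.trace 𝕜 _ M.toEuclideanLin = M.trace :=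
  trace_toLin_eq M (PiLp.basisFun 2 𝕜 n)

lemma IsHermitian.toEuclideanLin_eigenvectorBasis {M : Matrix n n 𝕜} (hM : M.IsHermitian)
    (j : n) :
    M.toEuclideanLin (hM.eigenvectorBasis j) = (hM.eigenvalues j : 𝕜) • hM.eigenvectorBasis j := by
  rw [toLpLin_apply, hM.mulVec_eigenvectorBasis, RCLike.real_smul_eq_coe_smul (K := 𝕜)]
  rfl

lemma IsHermitian.trace_mul_eq_sum_inner {M : Matrix n n 𝕜} (hM : M.IsHermitian)
    (A : Matrix n n 𝕜) :
    (A * M).trace = ∑ j, (hM.eigenvalues j : 𝕜) *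
      ⟪hM.eigenvectorBasis j, A.toEuclideanLin (hM.eigenvectorBasis j)⟫_𝕜 := by
  rw [← trace_toEuclideanLin, LinearMap.trace_eq_sum_inner _ hM.eigenvectorBasis]
  refine Fintype.sum_congr _ _ fun j ↦ ?_
  rw [toLpLin_mul 2 2 2, LinearMap.comp_apply, hM.toEuclideanLin_eigenvectorBasis, map_smul,
    inner_smul_right]

lemma re_inner_toEuclideanLin_conjTranspose_mul_self (A : Matrix n n 𝕜)
    (x : EuclideanSpace 𝕜 n) :
    RCLike.re ⟪(Aᴴ * A).toEuclideanLin x, x⟫_𝕜 = ‖A.toEuclideanLin x‖ ^ 2 := by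
  rw [toLpLin_mul 2 2 2, LinearMap.comp_apply, toEuclideanLin_conjTranspose_eq_adjoint,
    LinearMap.adjoint_inner_left, ← norm_sq_eq_re_inner]

lemma sum_norm_toEuclideanLin_sq_le {ι : Type*} [Fintype ι] {A : ι → Matrix n n 𝕜}
    (hA : (1 - ∑ i, (A i)ᴴ * A i).PosSemidef) (x : EuclideanSpace 𝕜 n) :
    ∑ i, ‖(A i).toEuclideanLin x‖ ^ 2 ≤ ‖x‖ ^ 2 := by
  have h := (isPositive_toEuclideanLin_iff.mpr hA).re_inner_nonneg_left x
  rw [map_sub, LinearMap.sub_apply, inner_sub_left, map_sub, map_sum, LinearMap.sum_apply,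
    sum_inner, map_sum] at h
  simp only [re_inner_toEuclideanLin_conjTranspose_mul_self] at h
  rw [toLpLin_one, LinearMap.id_apply, ← norm_sq_eq_re_inner] at h
  linarith

end Matrix

section Kraus

variable {𝕜 n ι : Type*} [RCLike 𝕜] [Fintype n]

noncomputable def krausTraceVec (A : ι → Matrix n n 𝕜) (M : Matrix n n 𝕜) :
    EuclideanSpace 𝕜 ι :=
  WithLp.toLp 2 fun i ↦ (A i * M).trace

lemma norm_krausTraceVec_sq [Fintype ι] (A : ι → Matrix n n 𝕜) (M : Matrix n n 𝕜) :
    ‖krausTraceVec A M‖ ^ 2 = ∑ i, ‖(A i * M).trace‖ ^ 2 :=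
  EuclideanSpace.norm_sq_eq _

lemma krausTraceVec_add (A : ι → Matrix n n 𝕜) (M N : Matrix n n 𝕜) :
    krausTraceVec A (M + N) = krausTraceVec A M + krausTraceVec A N := by
  ext i
  simp [krausTraceVec, mul_add]

variable [DecidableEq n]

noncomputable def krausInnerVec (A : ι → Matrix n n 𝕜) (x : EuclideanSpace 𝕜 n) :
    EuclideanSpace 𝕜 ι :=
  WithLp.toLp 2 fun i ↦ ⟪x, (A i).toEuclideanLin x⟫_𝕜

lemma norm_krausInnerVec_le [Fintype ι] {A : ι → Matrix n n 𝕜}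
    (hA : (1 - ∑ i, (A i)ᴴ * A i).PosSemidef) (x : EuclideanSpace 𝕜 n) :
    ‖krausInnerVec A x‖ ≤ ‖x‖ ^ 2 := by
  refine le_of_sq_le_sq ?_ (by positivity)
  calc ‖krausInnerVec A x‖ ^ 2 = ∑ i, ‖⟪x, (A i).toEuclideanLin x⟫_𝕜‖ ^ 2 :=
        EuclideanSpace.norm_sq_eq _
    _ ≤ ∑ i, ‖x‖ ^ 2 * ‖(A i).toEuclideanLin x‖ ^ 2 := by
        gcongr
        rw [← mul_pow]
        gcongr
        exact norm_inner_le_norm _ _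
    _ ≤ (‖x‖ ^ 2) ^ 2 := by
        rw [← Finset.mul_sum, sq (‖x‖ ^ 2)]
        gcongr
        exact sum_norm_toEuclideanLin_sq_le hA x

lemma Matrix.IsHermitian.krausTraceVec_eq_sum {M : Matrix n n 𝕜} (hM : M.IsHermitian)
    (A : ι → Matrix n n 𝕜) :
    krausTraceVec A M =
      ∑ j, (hM.eigenvalues j : 𝕜) • krausInnerVec A (hM.eigenvectorBasis j) := by
  ext i
  simp [krausTraceVec, krausInnerVec, hM.trace_mul_eq_sum_inner, RCLike.real_smul_eq_coe_mul]

lemma Matrix.IsHermitian.norm_krausTraceVec_le {M : Matrix n n 𝕜} (hM : M.IsHermitian)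
    [Fintype ι] {A : ι → Matrix n n 𝕜} (hA : (1 - ∑ i, (A i)ᴴ * A i).PosSemidef) :
    ‖krausTraceVec A M‖ ≤ ∑ j, |hM.eigenvalues j| := by
  rw [hM.krausTraceVec_eq_sum A]
  refine (norm_sum_le _ _).trans (Finset.sum_le_sum fun j _ ↦ ?_)
  rw [norm_smul, RCLike.norm_ofReal]
  calc |hM.eigenvalues j| * ‖krausInnerVec A (hM.eigenvectorBasis j)‖
      ≤ |hM.eigenvalues j| * ‖hM.eigenvectorBasis j‖ ^ 2 := by
        gcongr; exact norm_krausInnerVec_le hA _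
    _ = |hM.eigenvalues j| := by rw [hM.eigenvectorBasis.orthonormal.1 j, one_pow, mul_one]

end Kraus

open scoped ComplexOrder in
/-- Continuity of entanglement fidelity in the input operator:
`|F_e(B + Δ, A) - F_e(B, A)| ≤ (tr|Δ|)² + 2 tr|Δ|`, where `|Δ| = √(ΔᴴΔ)`. -/
theorem stmt_7 {d r : ℕ} (A : Fin r → Matrix (Fin d) (Fin d) ℂ)
    (hA : (1 - ∑ i, (A i)ᴴ * A i).PosSemidef)
    (B Δ : Matrix (Fin d) (Fin d) ℂ)
    (hB : B.PosSemidef) (hBtr : B.trace.re ≤ 1) (hΔ : Δ.IsHermitian) :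
    |∑ i, ‖(A i * (B + Δ)).trace‖ ^ 2 - ∑ i, ‖(A i * B).trace‖ ^ 2| ≤
      ((Matrix.posSemidef_conjTranspose_mul_self Δ).sqrt.trace).re ^ 2 +
        2 * ((Matrix.posSemidef_conjTranspose_mul_self Δ).sqrt.trace).re := by
  set t := ((posSemidef_conjTranspose_mul_self Δ).sqrt.trace).re
  have hΔv : ‖krausTraceVec A Δ‖ ≤ t := by
    simpa [t, hΔ.trace_sqrt_conjTranspose_mul_self] using hΔ.norm_krausTraceVec_le hA
  have hBv : ‖krausTraceVec A B‖ ≤ 1 :=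
    (hB.1.norm_krausTraceVec_le hA).trans (hB.sum_abs_eigenvalues_eq_re_trace ▸ hBtr)
  rw [← norm_krausTraceVec_sq, ← norm_krausTraceVec_sq, krausTraceVec_add]
  calc _ ≤ ‖krausTraceVec A Δ‖ * (2 * ‖krausTraceVec A B‖ + ‖krausTraceVec A Δ‖) :=
        abs_norm_add_sq_sub_norm_sq_le _ _
    _ ≤ t * (2 * 1 + t) := by gcongr; exact (norm_nonneg _).trans hΔv
    _ = t ^ 2 + 2 * t := by ring
end

section
/- Construct recursively: ρ̃₀ = ρ; |i⟩ a unit vector in the support of ρ̃ᵢ₋₁; qᵢ the largest q ≥ 0 with ρ̃ᵢ₋₁ - q|i⟩⟨i| ≥ 0; ρ̃ᵢ = ρ̃ᵢ₋₁ - qᵢ|i⟩⟨i|. Then rank(ρ̃ᵢ) = rank(ρ̃ᵢ₋₁) - 1, the process terminates with Σᵢ₌₁ᴷ qᵢ|i⟩⟨i| = ρ where K = rank(ρ), and each qᵢ ≤ λ₁(ρ), the largest eigenvalue of ρ. -/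
/-!
If `v` lies in the range of a positive semidefinite `B`, say `v = B w`, Cauchy–Schwarz for the
form `x ↦ x* B x` gives `|v* x|² ≤ (w* B w) (x* B x)`, so `δ v v* ≤ B` for some `δ > 0`.
Hence, for the maximal `q`, the vector `v` is no longer in the range of `ρ̃ - q v v*`; since
this range lies in the range of `ρ̃` and misses at most the line through `v`, the rank drops by
exactly one. After `K = rank ρ` steps the rank is zero, the sum telescopes to `ρ`, and
`qᵢ ≤ ⟨i|ρ̃ᵢ₋₁|i⟩ ≤ ⟨i|ρ|i⟩ ≤ λ₁(ρ)` because `ρ - ρ̃ᵢ₋₁` is a sum of positive terms.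
-/

open Matrix RCLike
open scoped ComplexOrder

open Module Submodule in
theorem LinearMap.finrank_range_add_one_of_sub_mem_span {K V W : Type*} [Field K]
    [AddCommGroup V] [Module K V] [AddCommGroup W] [Module K W] [FiniteDimensional K W]
    {f g : V →ₗ[K] W} {v : W} (hfg : ∀ x, f x - g x ∈ K ∙ v) (hv : v ∈ range f)
    (hv' : v ∉ range g) :
    finrank K (range g) + 1 = finrank K (range f) := by
  have hspan : (K ∙ v) ≤ range f := (span_singleton_le_iff_mem v _).mpr hv
  have hle : range g ≤ range f := by
    rintro _ ⟨x, rfl⟩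
    simpa using sub_mem (mem_range_self f x) (hspan (hfg x))
  have hlt : finrank K (range g) < finrank K (range f) :=
    finrank_lt_finrank_of_lt (lt_of_le_of_ne hle fun h => hv' (h ▸ hv))
  have hge : range f ≤ range g ⊔ (K ∙ v) := by
    rintro _ ⟨x, rfl⟩
    simpa using add_mem_sup (mem_range_self g x) (hfg x)
  have hsingle : finrank K (K ∙ v) ≤ 1 := by
    simpa using finrank_span_le_card (R := K) ({v} : Set W)
  have := (finrank_mono hge).trans (finrank_add_le_finrank_add_finrank _ _)
  omega

namespace Matrix

theorem eq_zero_of_rank_eq_zero {m n K : Type*} [Fintype n] [DecidableEq n] [Field K]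
    {A : Matrix m n K} (h : A.rank = 0) : A = 0 := by
  have : LinearMap.range A.mulVecLin = ⊥ := Submodule.finrank_eq_zero.mp h
  rw [LinearMap.range_eq_bot, ← toLin'_apply'] at this
  exact toLin'.injective (by simpa using this)

variable {n 𝕜 : Type*} [Fintype n] [RCLike 𝕜]

lemma dotProduct_vecMulVec_mulVec (v x : n → 𝕜) :
    star x ⬝ᵥ vecMulVec v (star v) *ᵥ x = ((‖star v ⬝ᵥ x‖ ^ 2 : ℝ) : 𝕜) := by
  rw [ofReal_pow, ← RCLike.conj_mul, vecMulVec_mulVec, dotProduct_comm]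
  simp only [dotProduct, Pi.smul_apply, Pi.star_apply, map_sum, map_mul, RCLike.star_def,
    conj_conj, MulOpposite.smul_eq_mul_unop, MulOpposite.unop_op, Finset.sum_mul]
  exact Finset.sum_congr rfl fun _ _ => by ring

lemma PosSemidef.norm_dotProduct_mulVec_sq_le {B : Matrix n n 𝕜} (hB : B.PosSemidef)
    (w x : n → 𝕜) :
    ‖star w ⬝ᵥ B *ᵥ x‖ ^ 2 ≤ re (star w ⬝ᵥ B *ᵥ w) * re (star x ⬝ᵥ B *ᵥ x) := by
  let _ := B.toSeminormedAddCommGroup hB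
  let _ := B.toInnerProductSpace hB
  have h := inner_mul_inner_self_le (𝕜 := 𝕜) w x
  rw [← inner_conj_symm x w, norm_conj, ← sq] at h
  rwa [dotProduct_comm (star w), dotProduct_comm (star w), dotProduct_comm (star x)]

theorem PosSemidef.exists_pos_posSemidef_sub_smul_vecMulVec {B : Matrix n n 𝕜}
    (hB : B.PosSemidef) {v : n → 𝕜} (hv : v ∈ LinearMap.range B.mulVecLin) :
    ∃ δ : ℝ, 0 < δ ∧ (B - (δ : 𝕜) • vecMulVec v (star v)).PosSemidef := by
  obtain ⟨w, rfl⟩ := hv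
  -- `t + 1` rather than `t = w* B w`, which may vanish
  set t := re (star w ⬝ᵥ B *ᵥ w)
  have ht : 0 ≤ t := hB.re_dotProduct_nonneg w
  have hδ : 0 < (t + 1)⁻¹ := by positivity
  refine ⟨(t + 1)⁻¹, hδ, .of_dotProduct_mulVec_nonneg
    (hB.1.sub ((posSemidef_vecMulVec_self_star _).smul (ofReal_nonneg.mpr hδ.le)).1) fun x => ?_⟩
  have hvx : star (B.mulVecLin w) ⬝ᵥ x = star w ⬝ᵥ B *ᵥ x := by
    rw [mulVecLin_apply, star_mulVec, hB.1.eq, ← dotProduct_mulVec]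
  have hx := nonneg_iff.mp (hB.dotProduct_mulVec_nonneg x)
  rw [sub_mulVec, dotProduct_sub, smul_mulVec, dotProduct_smul, dotProduct_vecMulVec_mulVec, hvx,
    smul_eq_mul, ← ofReal_mul, sub_nonneg, le_iff_re_im, ofReal_re, ofReal_im, hx.2]
  refine ⟨?_, rfl⟩
  rw [inv_mul_le_iff₀ (by positivity)]
  nlinarith [hB.norm_dotProduct_mulVec_sq_le w x]

theorem rank_sub_smul_vecMulVec_add_one {A : Matrix n n 𝕜} {v : n → 𝕜} {q : ℝ}
    (hv : v ∈ LinearMap.range A.mulVecLin) (hq₀ : 0 ≤ q)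
    (hq : (A - (q : 𝕜) • vecMulVec v (star v)).PosSemidef)
    (hmax : ∀ q' : ℝ, 0 ≤ q' → (A - (q' : 𝕜) • vecMulVec v (star v)).PosSemidef → q' ≤ q) :
    (A - (q : 𝕜) • vecMulVec v (star v)).rank + 1 = A.rank := by
  refine LinearMap.finrank_range_add_one_of_sub_mem_span (v := v) (fun x => ?_) hv fun hv' => ?_
  · simp only [mulVecLin_apply, sub_mulVec, sub_sub_cancel, smul_mulVec, vecMulVec_mulVec,
      op_smul_eq_smul, smul_smul]
    exact Submodule.smul_mem _ _ (Submodule.mem_span_singleton_self v)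
  · obtain ⟨δ, hδ, hδq⟩ := hq.exists_pos_posSemidef_sub_smul_vecMulVec hv'
    rw [sub_sub, ← add_smul, ← ofReal_add] at hδq
    linarith [hmax (q + δ) (by positivity) hδq]

open scoped MatrixOrder in
lemma IsHermitian.le_iSup_eigenvalues_smul_one [DecidableEq n] {A : Matrix n n 𝕜}
    (hA : A.IsHermitian) : A ≤ (⨆ j, hA.eigenvalues j) • (1 : Matrix n n 𝕜) := by
  rw [← Algebra.algebraMap_eq_smul_one]
  refine le_algebraMap_of_spectrum_le (fun x hx => ?_) hA
  rw [hA.spectrum_real_eq_range_eigenvalues] at hx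
  obtain ⟨j, rfl⟩ := hx
  exact le_ciSup (Finite.bddAbove_range _) j

theorem IsHermitian.le_iSup_eigenvalues_of_posSemidef_sub_smul_vecMulVec [DecidableEq n]
    {A : Matrix n n 𝕜} (hA : A.IsHermitian) {v : n → 𝕜} (hv : star v ⬝ᵥ v = 1) {c : ℝ}
    (hc : (A - (c : 𝕜) • vecMulVec v (star v)).PosSemidef) :
    c ≤ ⨆ j, hA.eigenvalues j := by
  have hcA := hc.dotProduct_mulVec_nonneg v
  have hAmax := hA.le_iSup_eigenvalues_smul_one.dotProduct_mulVec_nonneg v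
  rw [sub_mulVec, dotProduct_sub, sub_nonneg, smul_mulVec, dotProduct_smul,
    dotProduct_vecMulVec_mulVec, hv, norm_one, one_pow, ofReal_one, smul_eq_mul, mul_one] at hcA
  rw [sub_mulVec, dotProduct_sub, sub_nonneg, smul_mulVec, one_mulVec, dotProduct_smul, hv,
    real_smul_eq_coe_mul, mul_one] at hAmax
  exact ofReal_le_ofReal.mp (hcA.trans hAmax)

end Matrix

open scoped ComplexOrder in
theorem stmt_15_general {d K : ℕ} (ρ : Matrix (Fin d) (Fin d) ℂ)
    (hρ : ρ.PosSemidef) (hK : ρ.rank = K)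
    (ρt : ℕ → Matrix (Fin d) (Fin d) ℂ) (v : ℕ → (Fin d → ℂ)) (q : ℕ → ℝ)
    (h0 : ρt 0 = ρ)
    (hv : ∀ i < K, dotProduct (star (v (i + 1))) (v (i + 1)) = 1 ∧
      v (i + 1) ∈ LinearMap.range (ρt i).mulVecLin)
    (hq : ∀ i < K, 0 ≤ q (i + 1) ∧
      (ρt i - ((q (i + 1) : ℝ) : ℂ) • Matrix.vecMulVec (v (i + 1)) (star (v (i + 1)))).PosSemidef ∧
      ∀ q' : ℝ, 0 ≤ q' →
        (ρt i - ((q' : ℝ) : ℂ) • Matrix.vecMulVec (v (i + 1)) (star (v (i + 1)))).PosSemidef →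
        q' ≤ q (i + 1))
    (hrec : ∀ i < K, ρt (i + 1) =
      ρt i - ((q (i + 1) : ℝ) : ℂ) • Matrix.vecMulVec (v (i + 1)) (star (v (i + 1)))) :
    (∀ i < K, (ρt (i + 1)).rank = (ρt i).rank - 1) ∧
    ρt K = 0 ∧
    (∑ i ∈ Finset.range K,
      ((q (i + 1) : ℝ) : ℂ) • Matrix.vecMulVec (v (i + 1)) (star (v (i + 1)))) = ρ ∧
    (∀ i < K, q (i + 1) ≤ ⨆ j, hρ.1.eigenvalues j) := by
  have hdrop : ∀ i < K, (ρt (i + 1)).rank + 1 = (ρt i).rank := fun i hi => by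
    obtain ⟨hq₀, hqpsd, hqmax⟩ := hq i hi
    rw [hrec i hi]
    exact rank_sub_smul_vecMulVec_add_one (hv i hi).2 hq₀ hqpsd hqmax
  have hrank : ∀ i ≤ K, (ρt i).rank + i = K := by
    intro i
    induction i with
    | zero => simp [h0, hK]
    | succ i ih => intro hi; have := hdrop i hi; have := ih (by omega); omega
  have hsum : ∀ i ≤ K, ∑ j ∈ Finset.range i,
      ((q (j + 1) : ℝ) : ℂ) • vecMulVec (v (j + 1)) (star (v (j + 1))) = ρ - ρt i := by
    intro i hi
    rw [← h0, ← Finset.sum_range_sub']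
    exact Finset.sum_congr rfl fun j hj => by
      rw [hrec j (by have := Finset.mem_range.mp hj; omega), sub_sub_cancel]
  have hK0 : ρt K = 0 := eq_zero_of_rank_eq_zero (by simpa using hrank K le_rfl)
  refine ⟨fun i hi => by have := hdrop i hi; omega, hK0, by rw [hsum K le_rfl, hK0, sub_zero],
    fun i hi => hρ.1.le_iSup_eigenvalues_of_posSemidef_sub_smul_vecMulVec (hv i hi).1 ?_⟩
  have hpeeled : (ρ - ρt i).PosSemidef := hsum i hi.le ▸ posSemidef_sum _ fun j hj =>
    have hj : j < K := by have := Finset.mem_range.mp hj; omega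
    (posSemidef_vecMulVec_self_star _).smul (ofReal_nonneg.mpr (hq j hj).1)
  simpa using hpeeled.add (hq i hi).2.1

open scoped ComplexOrder in
/-- The recursive peeling construction: `ρ̃₀ = ρ`; `|i⟩` a unit vector in the support of
`ρ̃ᵢ₋₁`; `qᵢ` the largest `q ≥ 0` with `ρ̃ᵢ₋₁ - q|i⟩⟨i| ≥ 0`; `ρ̃ᵢ = ρ̃ᵢ₋₁ - qᵢ|i⟩⟨i|`.
Then the rank drops by one at each step, the process terminates with
`Σᵢ₌₁ᴷ qᵢ|i⟩⟨i| = ρ` where `K = rank ρ`, and each `qᵢ ≤ λ₁(ρ)`, the largest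
eigenvalue of `ρ`. -/
theorem stmt_15 {d K : ℕ} (ρ : Matrix (Fin d) (Fin d) ℂ)
    (hρ : ρ.PosSemidef) (htr : ρ.trace = 1) (hK : ρ.rank = K)
    (ρt : ℕ → Matrix (Fin d) (Fin d) ℂ) (v : ℕ → (Fin d → ℂ)) (q : ℕ → ℝ)
    (h0 : ρt 0 = ρ)
    (hv : ∀ i < K, dotProduct (star (v (i + 1))) (v (i + 1)) = 1 ∧
      v (i + 1) ∈ LinearMap.range (ρt i).mulVecLin)
    (hq : ∀ i < K, 0 ≤ q (i + 1) ∧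
      (ρt i - ((q (i + 1) : ℝ) : ℂ) • Matrix.vecMulVec (v (i + 1)) (star (v (i + 1)))).PosSemidef ∧
      ∀ q' : ℝ, 0 ≤ q' →
        (ρt i - ((q' : ℝ) : ℂ) • Matrix.vecMulVec (v (i + 1)) (star (v (i + 1)))).PosSemidef →
        q' ≤ q (i + 1))
    (hrec : ∀ i < K, ρt (i + 1) =
      ρt i - ((q (i + 1) : ℝ) : ℂ) • Matrix.vecMulVec (v (i + 1)) (star (v (i + 1)))) :
    (∀ i < K, (ρt (i + 1)).rank = (ρt i).rank - 1) ∧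
    ρt K = 0 ∧
    (∑ i ∈ Finset.range K,
      ((q (i + 1) : ℝ) : ℂ) • Matrix.vecMulVec (v (i + 1)) (star (v (i + 1)))) = ρ ∧
    (∀ i < K, q (i + 1) ≤ ⨆ j, hρ.1.eigenvalues j) :=
  stmt_15_general ρ hρ hK ρt v q h0 hv hq hrec
end

section
/- If every pure state |ψ⟩ in a subspace S satisfies ⟨ψ|E(|ψ⟩⟨ψ|)|ψ⟩ ≥ 1 - η for a trace-preserving quantum operation E, then every density operator ρ with support contained in S has entanglement fidelity F_e(ρ, E) ≥ 1 - (3/2)η. -/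
open Matrix Complex

section Aux

lemma sum4_eq_zero (z : ℂ) (h4 : z ^ 4 = 1) (h1 : z ≠ 1) :
    ∑ t : Fin 4, z ^ (t : ℕ) = 0 := by
  have key : (z - 1) * ∑ t : Fin 4, z ^ (t : ℕ) = z ^ 4 - 1 := by
    rw [Fin.sum_univ_four,
      show ((0 : Fin 4) : ℕ) = 0 from rfl, show ((1 : Fin 4) : ℕ) = 1 from rfl,
      show ((2 : Fin 4) : ℕ) = 2 from rfl, show ((3 : Fin 4) : ℕ) = 3 from rfl]
    ring
  rw [h4, sub_self] at key
  rcases mul_eq_zero.mp key with h | h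
  · exact absurd (sub_eq_zero.mp h) h1
  · exact h

lemma charSum (n n' : ℕ) (hn : n ≤ 2) (hn' : n' ≤ 2) :
    ∑ t : Fin 4, Complex.I ^ (n * (t : ℕ)) * (-Complex.I) ^ (n' * (t : ℕ)) =
      if n = n' then 4 else 0 := by
  have hterm : ∀ t : Fin 4, Complex.I ^ (n * (t : ℕ)) * (-Complex.I) ^ (n' * (t : ℕ))
      = (Complex.I ^ n * (-Complex.I) ^ n') ^ (t : ℕ) := by
    intro t
    rw [mul_pow, mul_comm n, mul_comm n', pow_mul, pow_mul]
    ring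
  simp only [hterm]
  by_cases h : n = n'
  · subst h
    have h1 : Complex.I ^ n * (-Complex.I) ^ n = 1 := by
      rw [← mul_pow]; simp
    simp [h1]
  · rw [if_neg h]
    apply sum4_eq_zero
    · rw [mul_pow, ← pow_mul, ← pow_mul, mul_comm n 4, mul_comm n' 4, pow_mul, pow_mul]
      rw [Even.neg_pow (by decide : Even 4)]; norm_num
    · interval_cases n <;> interval_cases n' <;>
        simp_all [pow_succ, Complex.ext_iff] <;> norm_num

variable {d : ℕ}

def mm (p q : Fin d × Fin d) (j : Fin d) : ℕ :=
  (if p.2 = j then 1 else 0) + (if q.1 = j then 1 else 0)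

def mm' (p q : Fin d × Fin d) (j : Fin d) : ℕ :=
  (if p.1 = j then 1 else 0) + (if q.2 = j then 1 else 0)

lemma mm_cond (p q : Fin d × Fin d) :
    (∀ j, mm p q j = mm' p q j) ↔ ((p.1 = p.2 ∧ q.1 = q.2) ∨ p = q) := by
  obtain ⟨k, l⟩ := p
  obtain ⟨a, b⟩ := q
  simp only [mm, mm', Prod.ext_iff]
  constructor
  · intro H
    by_cases hkl : k = l
    · subst hkl
      left
      refine ⟨rfl, ?_⟩
      have h1 := H a
      rw [if_pos rfl] at h1
      by_cases hba : b = a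
      · exact hba.symm
      · rw [if_neg hba] at h1; omega
    · right
      have h1 := H k
      have h2 := H l
      rw [if_neg (Ne.symm hkl), if_pos rfl] at h1
      rw [if_pos rfl, if_neg hkl] at h2
      constructor
      · by_cases hak : a = k
        · exact hak.symm
        · rw [if_neg hak] at h1
          by_cases hbk : b = k
          · rw [if_pos hbk] at h1; omega
          · rw [if_neg hbk] at h1; omega
      · by_cases hbl : b = l
        · exact hbl.symm
        · rw [if_neg hbl] at h2
          by_cases hal : a = l
          · rw [if_pos hal] at h2; omega
          · rw [if_neg hal] at h2; omega
  · rintro (⟨h1, h2⟩ | ⟨h1, h2⟩) j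
    · rw [h1, ← h2]
    · rw [h1, h2]; ring

lemma mm_le (p q : Fin d × Fin d) (j : Fin d) : mm p q j ≤ 2 := by
  unfold mm; split_ifs <;> omega

lemma mm'_le (p q : Fin d × Fin d) (j : Fin d) : mm' p q j ≤ 2 := by
  unfold mm'; split_ifs <;> omega

lemma phase_prod (p q : Fin d × Fin d) (θ : Fin d → Fin 4) :
    (∏ j, (Complex.I ^ (mm p q j * (θ j : ℕ)) * (-Complex.I) ^ (mm' p q j * (θ j : ℕ))))
    = Complex.I ^ (θ p.2 : ℕ) * (-Complex.I) ^ (θ p.1 : ℕ)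
      * ((-Complex.I) ^ (θ q.2 : ℕ) * Complex.I ^ (θ q.1 : ℕ)) := by
  have e : ∀ (z : ℂ) (a b : Fin d),
      (∏ j, z ^ ((((if a = j then 1 else 0) + (if b = j then 1 else 0)) : ℕ) * (θ j : ℕ)))
      = z ^ (θ a : ℕ) * z ^ (θ b : ℕ) := by
    intro z a b
    have h : ∀ j : Fin d, z ^ (((if a = j then 1 else 0) + (if b = j then 1 else 0)) * (θ j : ℕ))
        = (if a = j then z ^ (θ j : ℕ) else 1) * (if b = j then z ^ (θ j : ℕ) else 1) := by
      intro j; split_ifs <;> simp [add_mul, pow_add, two_mul]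
    rw [Finset.prod_congr rfl (fun j _ => h j), Finset.prod_mul_distrib,
      Finset.prod_ite_eq, Finset.prod_ite_eq]
    simp
  rw [Finset.prod_mul_distrib]
  unfold mm mm'
  rw [e, e]
  ring

lemma W_eval (p q : Fin d × Fin d) :
    (∑ θ : Fin d → Fin 4,
      ∏ j, (Complex.I ^ (mm p q j * (θ j : ℕ)) * (-Complex.I) ^ (mm' p q j * (θ j : ℕ))))
    = if (p.1 = p.2 ∧ q.1 = q.2) ∨ p = q then ((4 : ℂ) ^ d) else 0 := by
  rw [← Fintype.prod_sum (fun (j : Fin d) (t : Fin 4) =>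
    Complex.I ^ (mm p q j * (t : ℕ)) * (-Complex.I) ^ (mm' p q j * (t : ℕ)))]
  have h : ∀ j : Fin d,
      (∑ t : Fin 4, Complex.I ^ (mm p q j * (t : ℕ)) * (-Complex.I) ^ (mm' p q j * (t : ℕ)))
      = if mm p q j = mm' p q j then (4 : ℂ) else 0 :=
    fun j => charSum _ _ (mm_le p q j) (mm'_le p q j)
  rw [Finset.prod_congr rfl (fun j _ => h j)]
  by_cases hall : ∀ j, mm p q j = mm' p q j
  · rw [if_pos ((mm_cond p q).mp hall),
      Finset.prod_congr rfl (fun j _ => if_pos (hall j)), Finset.prod_const]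
    simp
  · rw [if_neg (fun h' => hall ((mm_cond p q).mpr h'))]
    push_neg at hall
    obtain ⟨j0, hj0⟩ := hall
    exact Finset.prod_eq_zero (Finset.mem_univ j0) (if_neg hj0)

lemma diag_collapse (f : Fin d × Fin d → ℂ) :
    ∑ p : Fin d × Fin d, (if p.1 = p.2 then f p else 0) = ∑ k, f (k, k) := by
  rw [Fintype.sum_prod_type]
  refine Finset.sum_congr rfl fun a _ => ?_
  simpa using Finset.sum_ite_eq Finset.univ a (fun b => f (a, b))

lemma indicator_sum (c : Fin d × Fin d → ℂ) :
    ∑ p : Fin d × Fin d, ∑ q : Fin d × Fin d, (c p * (starRingEnd ℂ) (c q))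
        * (if (p.1 = p.2 ∧ q.1 = q.2) ∨ p = q then ((4 : ℂ) ^ d) else 0)
    = 4 ^ d * ((∑ p : Fin d × Fin d, c p * (starRingEnd ℂ) (c p))
        + (∑ k, c (k, k)) * (starRingEnd ℂ) (∑ k, c (k, k))
        - ∑ k, c (k, k) * (starRingEnd ℂ) (c (k, k))) := by
  have split : ∀ p q : Fin d × Fin d,
      (c p * (starRingEnd ℂ) (c q))
        * (if (p.1 = p.2 ∧ q.1 = q.2) ∨ p = q then ((4 : ℂ) ^ d) else 0)
      = 4 ^ d * ((if p = q then c p * (starRingEnd ℂ) (c q) else 0)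
          + (if p.1 = p.2 then c p else 0) * (if q.1 = q.2 then (starRingEnd ℂ) (c q) else 0)
          - (if p = q then (if p.1 = p.2 then c p * (starRingEnd ℂ) (c q) else 0) else 0)) := by
    intro p q
    by_cases h1 : p = q
    · subst h1
      by_cases h2 : p.1 = p.2 <;> simp [h2] <;> ring
    · by_cases h2 : p.1 = p.2 <;> by_cases h3 : q.1 = q.2 <;> simp [h1, h2, h3] <;> ring
  simp only [split]
  simp only [← Finset.mul_sum]
  congr 1
  have h1 : ∑ p : Fin d × Fin d, ∑ q : Fin d × Fin d,
      (if p = q then c p * (starRingEnd ℂ) (c q) else 0)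
      = ∑ p : Fin d × Fin d, c p * (starRingEnd ℂ) (c p) := by
    refine Finset.sum_congr rfl fun p _ => ?_
    simpa using Finset.sum_ite_eq Finset.univ p (fun q => c p * (starRingEnd ℂ) (c q))
  have h2 : ∑ p : Fin d × Fin d, ∑ q : Fin d × Fin d,
      ((if p.1 = p.2 then c p else 0) * (if q.1 = q.2 then (starRingEnd ℂ) (c q) else 0))
      = (∑ k, c (k, k)) * (starRingEnd ℂ) (∑ k, c (k, k)) := by
    rw [← Finset.sum_mul_sum, diag_collapse,
      diag_collapse (fun p => (starRingEnd ℂ) (c p)), ← map_sum]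
  have h3 : ∑ p : Fin d × Fin d, ∑ q : Fin d × Fin d,
      (if p = q then (if p.1 = p.2 then c p * (starRingEnd ℂ) (c q) else 0) else 0)
      = ∑ k, c (k, k) * (starRingEnd ℂ) (c (k, k)) := by
    have h : ∀ p : Fin d × Fin d, ∑ q : Fin d × Fin d,
        (if p = q then (if p.1 = p.2 then c p * (starRingEnd ℂ) (c q) else 0) else 0)
        = (if p.1 = p.2 then c p * (starRingEnd ℂ) (c p) else 0) := by
      intro p
      simpa using Finset.sum_ite_eq Finset.univ p
        (fun q => if p.1 = p.2 then c p * (starRingEnd ℂ) (c q) else 0)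
    rw [Finset.sum_congr rfl fun p _ => h p,
      diag_collapse (fun p => c p * (starRingEnd ℂ) (c p))]
  calc ∑ p : Fin d × Fin d, ∑ q : Fin d × Fin d,
        ((if p = q then c p * (starRingEnd ℂ) (c q) else 0)
          + (if p.1 = p.2 then c p else 0) * (if q.1 = q.2 then (starRingEnd ℂ) (c q) else 0)
          - (if p = q then (if p.1 = p.2 then c p * (starRingEnd ℂ) (c q) else 0) else 0))
      = (∑ p : Fin d × Fin d, ∑ q : Fin d × Fin d,
          (if p = q then c p * (starRingEnd ℂ) (c q) else 0))
        + (∑ p : Fin d × Fin d, ∑ q : Fin d × Fin d,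
          ((if p.1 = p.2 then c p else 0) * (if q.1 = q.2 then (starRingEnd ℂ) (c q) else 0)))
        - (∑ p : Fin d × Fin d, ∑ q : Fin d × Fin d,
          (if p = q then (if p.1 = p.2 then c p * (starRingEnd ℂ) (c q) else 0) else 0)) := by
        simp [Finset.sum_add_distrib, Finset.sum_sub_distrib]
    _ = _ := by rw [h1, h2, h3]

lemma avg_identity (c : Fin d × Fin d → ℂ) :
    ∑ θ : Fin d → Fin 4, Complex.normSq (∑ p : Fin d × Fin d,
        c p * Complex.I ^ (θ p.2 : ℕ) * (-Complex.I) ^ (θ p.1 : ℕ))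
    = 4 ^ d * ((∑ p : Fin d × Fin d, Complex.normSq (c p))
        + Complex.normSq (∑ k, c (k, k)) - ∑ k, Complex.normSq (c (k, k))) := by
  have cast_eq : ((∑ θ : Fin d → Fin 4, Complex.normSq (∑ p : Fin d × Fin d,
        c p * Complex.I ^ (θ p.2 : ℕ) * (-Complex.I) ^ (θ p.1 : ℕ)) : ℝ) : ℂ)
      = ((4 ^ d * ((∑ p : Fin d × Fin d, Complex.normSq (c p))
        + Complex.normSq (∑ k, c (k, k)) - ∑ k, Complex.normSq (c (k, k))) : ℝ) : ℂ) := by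
    push_cast [← Complex.mul_conj]
    have conj_S : ∀ θ : Fin d → Fin 4,
        (starRingEnd ℂ) (∑ p : Fin d × Fin d,
          c p * Complex.I ^ (θ p.2 : ℕ) * (-Complex.I) ^ (θ p.1 : ℕ))
        = ∑ q : Fin d × Fin d,
          (starRingEnd ℂ) (c q) * (-Complex.I) ^ (θ q.2 : ℕ) * Complex.I ^ (θ q.1 : ℕ) := by
      intro θ
      rw [map_sum]
      refine Finset.sum_congr rfl fun q _ => ?_
      simp only [_root_.map_mul, map_pow, map_neg, Complex.conj_I, neg_neg]
    have expand : ∀ θ : Fin d → Fin 4,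
        (∑ p : Fin d × Fin d, c p * Complex.I ^ (θ p.2 : ℕ) * (-Complex.I) ^ (θ p.1 : ℕ))
          * (starRingEnd ℂ) (∑ p : Fin d × Fin d,
              c p * Complex.I ^ (θ p.2 : ℕ) * (-Complex.I) ^ (θ p.1 : ℕ))
        = ∑ p : Fin d × Fin d, ∑ q : Fin d × Fin d, (c p * (starRingEnd ℂ) (c q))
            * ∏ j, (Complex.I ^ (mm p q j * (θ j : ℕ))
                * (-Complex.I) ^ (mm' p q j * (θ j : ℕ))) := by
      intro θ
      rw [conj_S, Finset.sum_mul_sum]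
      refine Finset.sum_congr rfl fun p _ => Finset.sum_congr rfl fun q _ => ?_
      rw [phase_prod p q θ]
      ring
    calc (∑ θ : Fin d → Fin 4, (∑ p : Fin d × Fin d,
            c p * Complex.I ^ (θ p.2 : ℕ) * (-Complex.I) ^ (θ p.1 : ℕ))
          * (starRingEnd ℂ) (∑ p : Fin d × Fin d,
            c p * Complex.I ^ (θ p.2 : ℕ) * (-Complex.I) ^ (θ p.1 : ℕ)))
        = ∑ p : Fin d × Fin d, ∑ q : Fin d × Fin d, (c p * (starRingEnd ℂ) (c q))
            * ∑ θ : Fin d → Fin 4, ∏ j, (Complex.I ^ (mm p q j * (θ j : ℕ))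
                * (-Complex.I) ^ (mm' p q j * (θ j : ℕ))) := by
          rw [Finset.sum_congr rfl fun θ _ => expand θ]
          rw [Finset.sum_comm]
          refine Finset.sum_congr rfl fun p _ => ?_
          rw [Finset.sum_comm]
          refine Finset.sum_congr rfl fun q _ => ?_
          rw [Finset.mul_sum]
      _ = ∑ p : Fin d × Fin d, ∑ q : Fin d × Fin d, (c p * (starRingEnd ℂ) (c q))
            * (if (p.1 = p.2 ∧ q.1 = q.2) ∨ p = q then ((4 : ℂ) ^ d) else 0) := by
          refine Finset.sum_congr rfl fun p _ => Finset.sum_congr rfl fun q _ => ?_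
          rw [W_eval p q]
      _ = 4 ^ d * ((∑ p : Fin d × Fin d, c p * (starRingEnd ℂ) (c p))
            + (∑ k, c (k, k)) * (starRingEnd ℂ) (∑ k, c (k, k))
            - ∑ k, c (k, k) * (starRingEnd ℂ) (c (k, k))) := indicator_sum c
  exact_mod_cast cast_eq



open scoped ComplexOrder in
/-- If every pure state `|ψ⟩` in a subspace `S` satisfies
`⟨ψ|E(|ψ⟩⟨ψ|)|ψ⟩ ≥ 1 - η` for a trace-preserving quantum operation `E` (given by its
operator decomposition `{Aᵢ}`), then every density operator `ρ` with support contained in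
`S` has entanglement fidelity `F_e(ρ, E) = Σᵢ |tr(Aᵢρ)|² ≥ 1 - (3/2)η`. -/
theorem stmt_16 {d r : ℕ} (A : Fin r → Matrix (Fin d) (Fin d) ℂ)
    (hA : ∑ i, (A i)ᴴ * A i = 1)
    (S : Submodule ℂ (Fin d → ℂ)) (η : ℝ)
    (hfid : ∀ ψ : Fin d → ℂ, ψ ∈ S → dotProduct (star ψ) ψ = 1 →
      1 - η ≤ (dotProduct (star ψ)
        ((∑ i, A i * Matrix.vecMulVec ψ (star ψ) * (A i)ᴴ).mulVec ψ)).re)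
    (ρ : Matrix (Fin d) (Fin d) ℂ) (hρ : ρ.PosSemidef) (htr : ρ.trace = 1)
    (hsupp : LinearMap.range ρ.mulVecLin ≤ S) :
    1 - (3 / 2) * η ≤ ∑ i, ‖(A i * ρ).trace‖ ^ 2 := by
  classical
  have hH : ρ.IsHermitian := hρ.1
  set U : Matrix (Fin d) (Fin d) ℂ := (hH.eigenvectorUnitary : Matrix (Fin d) (Fin d) ℂ)
    with hUdef
  set lam : Fin d → ℝ := hH.eigenvalues with hlamdef
  have hU1 : Uᴴ * U = 1 := by
    rw [← Matrix.star_eq_conjTranspose]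
    exact (Matrix.mem_unitaryGroup_iff'.mp hH.eigenvectorUnitary.2)
  have hU2 : U * Uᴴ = 1 := by
    rw [← Matrix.star_eq_conjTranspose]
    exact (Matrix.mem_unitaryGroup_iff.mp hH.eigenvectorUnitary.2)
  have hspec : ρ = U * Matrix.diagonal (fun k => (lam k : ℂ)) * Uᴴ := by
    have h := hH.spectral_theorem
    rw [Unitary.conjStarAlgAut_apply, Matrix.star_eq_conjTranspose] at h
    exact h
  have hlam0 : ∀ k, 0 ≤ lam k := fun k => hρ.eigenvalues_nonneg k
  have hsum1 : ∑ k, lam k = 1 := by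
    have h : ρ.trace = ∑ k, (lam k : ℂ) := by
      rw [hspec, Matrix.trace_mul_cycle, hU1, Matrix.one_mul, Matrix.trace_diagonal]
    rw [htr] at h
    exact_mod_cast h.symm
  set B : Fin r → Matrix (Fin d) (Fin d) ℂ := fun i => Uᴴ * A i * U with hBdef
  have hBsum : ∑ i, (B i)ᴴ * B i = 1 := by
    have hc : ∀ i, (B i)ᴴ * B i = Uᴴ * ((A i)ᴴ * A i) * U := by
      intro i
      simp only [hBdef, Matrix.conjTranspose_mul, Matrix.conjTranspose_conjTranspose,
        Matrix.mul_assoc]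
      rw [← Matrix.mul_assoc U Uᴴ, hU2, Matrix.one_mul]
    calc ∑ i, (B i)ᴴ * B i = ∑ i, Uᴴ * ((A i)ᴴ * A i) * U :=
          Finset.sum_congr rfl (fun i _ => hc i)
      _ = Uᴴ * (∑ i, (A i)ᴴ * A i) * U := by rw [← Finset.sum_mul, ← Finset.mul_sum]
      _ = 1 := by rw [hA, Matrix.mul_one, hU1]
  have hcol : ∀ l, ∑ i, ∑ k, Complex.normSq (B i k l) = 1 := by
    intro l
    have h := congrArg (fun M : Matrix (Fin d) (Fin d) ℂ => M l l) hBsum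
    simp only [Matrix.sum_apply, Matrix.mul_apply, Matrix.conjTranspose_apply,
      Matrix.one_apply_eq, Complex.star_def] at h
    have h2 : ((∑ i, ∑ k, Complex.normSq (B i k l) : ℝ) : ℂ) = 1 := by
      push_cast
      rw [← h]
      refine Finset.sum_congr rfl fun i _ => Finset.sum_congr rfl fun k _ => ?_
      rw [← Complex.normSq_eq_conj_mul_self]
    exact_mod_cast h2
  have htrace : ∀ i, (A i * ρ).trace = ∑ k, (lam k : ℂ) * B i k k := by
    intro i
    have h1 : A i * ρ = (A i * U * Matrix.diagonal (fun k => (lam k : ℂ))) * Uᴴ := by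
      rw [hspec]; simp only [Matrix.mul_assoc]
    rw [h1, Matrix.trace_mul_comm]
    have h2 : Uᴴ * (A i * U * Matrix.diagonal (fun k => (lam k : ℂ)))
        = B i * Matrix.diagonal (fun k => (lam k : ℂ)) := by
      simp only [hBdef, Matrix.mul_assoc]
    rw [h2]
    simp [Matrix.trace, Matrix.diag, Matrix.mul_diagonal, mul_comm]
  -- generic dot-product transport under U
  have hdotU : ∀ (M : Matrix (Fin d) (Fin d) ℂ) (v : Fin d → ℂ),
      dotProduct (star (U *ᵥ v)) (M *ᵥ (U *ᵥ v))
      = dotProduct (star v) ((Uᴴ * M * U) *ᵥ v) := by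
    intro M v
    rw [Matrix.star_mulVec, ← Matrix.dotProduct_mulVec, Matrix.mulVec_mulVec,
      Matrix.mulVec_mulVec, Matrix.mul_assoc]
  have hconj : ∀ (M : Matrix (Fin d) (Fin d) ℂ) (ψ : Fin d → ℂ),
      (starRingEnd ℂ) (dotProduct (star ψ) (M *ᵥ ψ))
      = dotProduct (star ψ) (Mᴴ *ᵥ ψ) := by
    intro M ψ
    have h1 : star (dotProduct (star ψ) (M *ᵥ ψ))
        = dotProduct (star (M *ᵥ ψ)) ψ := by
      rw [Matrix.star_dotProduct, star_star]
    have h2 : dotProduct (star (M *ᵥ ψ)) ψ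
        = dotProduct (star ψ) (Mᴴ *ᵥ ψ) := by
      rw [Matrix.star_mulVec, ← Matrix.dotProduct_mulVec]
    exact h1.trans h2
  have hvmv : ∀ (ψ w : Fin d → ℂ), (Matrix.vecMulVec ψ (star ψ)) *ᵥ w
      = (dotProduct (star ψ) w) • ψ := by
    intro ψ w
    funext x
    simp only [Matrix.mulVec, Matrix.vecMulVec_apply, dotProduct, Pi.smul_apply,
      smul_eq_mul, Finset.sum_mul, Finset.mul_sum]
    refine Finset.sum_congr rfl fun y _ => ?_
    ring
  -- columns of U are eigenvectors / in S when eigenvalue nonzero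
  have hcols : ∀ k, lam k ≠ 0 → (fun x => U x k) ∈ S := by
    intro k hk
    have hUD : ρ * U = U * Matrix.diagonal (fun k => (lam k : ℂ)) := by
      rw [hspec, Matrix.mul_assoc, hU1, Matrix.mul_one]
    have heig : ρ *ᵥ (fun x => U x k) = ((lam k : ℂ)) • (fun x => U x k) := by
      funext x
      have h1 : (ρ *ᵥ fun y => U y k) x = (ρ * U) x k := by
        simp [Matrix.mulVec, dotProduct, Matrix.mul_apply]
      rw [h1, hUD, Matrix.mul_diagonal]
      simp [mul_comm]
    have hmem : ρ *ᵥ (fun x => U x k) ∈ S := hsupp ⟨(fun x => U x k), rfl⟩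
    have hmem2 : ((lam k : ℂ))⁻¹ • (ρ *ᵥ (fun x => U x k)) ∈ S := Submodule.smul_mem _ _ hmem
    have heq : ((lam k : ℂ))⁻¹ • (ρ *ᵥ (fun x => U x k)) = (fun x => U x k) := by
      rw [heig, smul_smul, inv_mul_cancel₀ (by exact_mod_cast hk), one_smul]
    rwa [heq] at hmem2
  -- reformulated fidelity hypothesis
  have key : ∀ v : Fin d → ℂ, (∀ k, lam k = 0 → v k = 0) →
      dotProduct (star v) v = 1 →
      1 - η ≤ ∑ i, Complex.normSq (dotProduct (star v) ((B i) *ᵥ v)) := by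
    intro v hv hn
    set ψ : Fin d → ℂ := U *ᵥ v with hψ
    have hmem : ψ ∈ S := by
      have hrep : ψ = ∑ k, v k • (fun x => U x k) := by
        funext x
        simp only [hψ, Matrix.mulVec, dotProduct, Finset.sum_apply, Pi.smul_apply,
          smul_eq_mul]
        exact Finset.sum_congr rfl fun k _ => mul_comm _ _
      rw [hrep]
      refine Submodule.sum_mem S fun k _ => ?_
      by_cases hk : lam k = 0
      · rw [hv k hk, zero_smul]; exact Submodule.zero_mem S
      · exact Submodule.smul_mem S _ (hcols k hk)
    have hnorm : dotProduct (star ψ) ψ = 1 := by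
      have h := hdotU 1 v
      rw [Matrix.one_mulVec, Matrix.mul_one, hU1, Matrix.one_mulVec] at h
      rw [hψ, h, hn]
    have hval := hfid ψ hmem hnorm
    have hexpr : dotProduct (star ψ)
        ((∑ i, A i * Matrix.vecMulVec ψ (star ψ) * (A i)ᴴ) *ᵥ ψ)
        = ((∑ i, Complex.normSq (dotProduct (star ψ) ((A i) *ᵥ ψ)) : ℝ) : ℂ) := by
      have hsmv : (∑ i, A i * Matrix.vecMulVec ψ (star ψ) * (A i)ᴴ) *ᵥ ψ
          = ∑ i, (A i * Matrix.vecMulVec ψ (star ψ) * (A i)ᴴ) *ᵥ ψ := by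
        funext x
        simp only [Matrix.mulVec, dotProduct, Matrix.sum_apply, Finset.sum_apply,
          Finset.sum_mul]
        rw [Finset.sum_comm]
      have hds : dotProduct (star ψ)
          (∑ i, (A i * Matrix.vecMulVec ψ (star ψ) * (A i)ᴴ) *ᵥ ψ)
          = ∑ i, dotProduct (star ψ) ((A i * Matrix.vecMulVec ψ (star ψ) * (A i)ᴴ) *ᵥ ψ) := by
        simp only [dotProduct, Finset.sum_apply, Finset.mul_sum]
        rw [Finset.sum_comm]
      rw [hsmv, hds]
      push_cast
      refine Finset.sum_congr rfl fun i _ => ?_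
      rw [← Matrix.mulVec_mulVec, ← Matrix.mulVec_mulVec, hvmv, Matrix.mulVec_smul,
        dotProduct_smul, smul_eq_mul, ← hconj, ← Complex.normSq_eq_conj_mul_self]
    rw [hexpr] at hval
    rw [Complex.ofReal_re] at hval
    have hBv : ∀ i, dotProduct (star ψ) ((A i) *ᵥ ψ)
        = dotProduct (star v) ((B i) *ᵥ v) := by
      intro i
      rw [hψ, hdotU (A i) v]
    calc (1 : ℝ) - η ≤ _ := hval
      _ = ∑ i, Complex.normSq (dotProduct (star v) ((B i) *ᵥ v)) := by
          exact Finset.sum_congr rfl fun i _ => by rw [hBv i]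
  set X : Fin d → Fin d → ℝ := fun k l => ∑ i, Complex.normSq (B i k l) with hXdef
  have hXnn : ∀ k l, 0 ≤ X k l := fun k l =>
    Finset.sum_nonneg fun i _ => Complex.normSq_nonneg _
  have hXcol : ∀ l, ∑ k, X k l = 1 := by
    intro l; rw [Finset.sum_comm]; exact hcol l
  have hdiag : ∀ l, lam l ≠ 0 → 1 - η ≤ X l l := by
    intro l hl
    have h := key (fun k => if k = l then 1 else 0)
      (fun k hk => by
        show (if k = l then (1 : ℂ) else 0) = 0
        refine if_neg fun he => hl ?_
        rw [← he]; exact hk)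
      (by simp [dotProduct, apply_ite, Finset.sum_ite_eq'])
    have hBv : ∀ i, dotProduct (star (fun k => if k = l then (1 : ℂ) else 0))
        ((B i) *ᵥ (fun k => if k = l then (1 : ℂ) else 0)) = B i l l := by
      intro i
      simp [dotProduct, Matrix.mulVec, apply_ite, Finset.sum_ite_eq', mul_ite,
        Finset.mul_sum]
    calc (1 : ℝ) - η ≤ _ := h
      _ = X l l := Finset.sum_congr rfl fun i _ => by rw [hBv i]
  set F : ℝ := ∑ i, Complex.normSq (∑ k, (lam k : ℂ) * B i k k) with hFdef
  have hgoalF : ∑ i, ‖(A i * ρ).trace‖ ^ 2 = F := by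
    refine Finset.sum_congr rfl fun i _ => ?_
    rw [htrace i, ← Complex.sq_norm]
  -- averaging bound
  have havg : 1 - η ≤ (∑ k, ∑ l, lam k * lam l * X k l) - (∑ k, lam k ^ 2 * X k k) + F := by
    set c : Fin r → (Fin d × Fin d) → ℂ := fun i p =>
      ((Real.sqrt (lam p.1) : ℂ) * (Real.sqrt (lam p.2) : ℂ)) * B i p.1 p.2 with hcdef
    set w : (Fin d → Fin 4) → (Fin d → ℂ) :=
      fun θ k => (Real.sqrt (lam k) : ℂ) * Complex.I ^ ((θ k : ℕ)) with hwdef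
    have hsupp0 : ∀ θ k, lam k = 0 → w θ k = 0 := by
      intro θ k hk; simp [hwdef, hk]
    have hnormv : ∀ θ, dotProduct (star (w θ)) (w θ) = 1 := by
      intro θ
      have h1 : ∀ k, star (w θ) k * w θ k = ((lam k : ℝ) : ℂ) := by
        intro k
        rw [Pi.star_apply, Complex.star_def, ← Complex.normSq_eq_conj_mul_self]
        simp only [hwdef, Complex.normSq_mul, Complex.normSq_ofReal, map_pow,
          Complex.normSq_I, one_pow, mul_one]
        rw [Real.mul_self_sqrt (hlam0 k)]
      rw [dotProduct, Finset.sum_congr rfl fun k _ => h1 k, ← Complex.ofReal_sum, hsum1,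
        Complex.ofReal_one]
    have hform : ∀ i θ, dotProduct (star (w θ)) ((B i) *ᵥ (w θ))
        = ∑ p : Fin d × Fin d,
            c i p * Complex.I ^ ((θ p.2 : ℕ)) * (-Complex.I) ^ ((θ p.1 : ℕ)) := by
      intro i θ
      rw [Fintype.sum_prod_type]
      simp only [dotProduct, Matrix.mulVec, Pi.star_apply, Finset.mul_sum]
      refine Finset.sum_congr rfl fun k _ => Finset.sum_congr rfl fun l _ => ?_
      simp only [hwdef, hcdef, Complex.star_def, _root_.map_mul, Complex.conj_ofReal,
        map_pow, Complex.conj_I]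
      ring
    have hkey : ∀ θ : Fin d → Fin 4, 1 - η ≤ ∑ i, Complex.normSq (∑ p : Fin d × Fin d,
        c i p * Complex.I ^ ((θ p.2 : ℕ)) * (-Complex.I) ^ ((θ p.1 : ℕ))) := by
      intro θ
      calc 1 - η ≤ _ := key (w θ) (fun k hk => hsupp0 θ k hk) (hnormv θ)
        _ = _ := Finset.sum_congr rfl fun i _ => by rw [hform i θ]
    have hcard : (Finset.univ : Finset (Fin d → Fin 4)).card = 4 ^ d := by
      rw [Finset.card_univ]
      simp [Fintype.card_fun]
    have hθsum : (4 : ℝ) ^ d * (1 - η) ≤ ∑ θ : Fin d → Fin 4, ∑ i,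
        Complex.normSq (∑ p : Fin d × Fin d,
          c i p * Complex.I ^ ((θ p.2 : ℕ)) * (-Complex.I) ^ ((θ p.1 : ℕ))) := by
      calc (4 : ℝ) ^ d * (1 - η) = ∑ _θ : Fin d → Fin 4, (1 - η) := by
            rw [Finset.sum_const, hcard, nsmul_eq_mul]
            push_cast
            ring
        _ ≤ _ := Finset.sum_le_sum fun θ _ => hkey θ
    have hsq : ∀ i p, Complex.normSq (c i p) = lam p.1 * lam p.2
        * Complex.normSq (B i p.1 p.2) := by
      intro i p
      simp only [hcdef, Complex.normSq_mul, Complex.normSq_ofReal]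
      rw [Real.mul_self_sqrt (hlam0 p.1), Real.mul_self_sqrt (hlam0 p.2)]
    have hdiagc : ∀ i k, c i (k, k) = ((lam k : ℝ) : ℂ) * B i k k := by
      intro i k
      simp only [hcdef]
      rw [← Complex.ofReal_mul, Real.mul_self_sqrt (hlam0 k)]
    have heval : ∑ θ : Fin d → Fin 4, ∑ i, Complex.normSq (∑ p : Fin d × Fin d,
          c i p * Complex.I ^ ((θ p.2 : ℕ)) * (-Complex.I) ^ ((θ p.1 : ℕ)))
        = (4 : ℝ) ^ d * ((∑ k, ∑ l, lam k * lam l * X k l)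
            - (∑ k, lam k ^ 2 * X k k) + F) := by
      rw [Finset.sum_comm, Finset.sum_congr rfl fun i _ => avg_identity (c i), ← Finset.mul_sum]
      congr 1
      have hP : ∑ i, ∑ p : Fin d × Fin d, Complex.normSq (c i p)
          = ∑ k, ∑ l, lam k * lam l * X k l := by
        rw [Finset.sum_comm, Fintype.sum_prod_type]
        refine Finset.sum_congr rfl fun k _ => Finset.sum_congr rfl fun l _ => ?_
        rw [Finset.sum_congr rfl fun i _ => hsq i (k, l), ← Finset.mul_sum]
      have hR : ∑ i, ∑ k, Complex.normSq (c i (k, k)) = ∑ k, lam k ^ 2 * X k k := by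
        rw [Finset.sum_comm]
        refine Finset.sum_congr rfl fun k _ => ?_
        have h1 : ∀ i, Complex.normSq (c i (k, k)) = lam k * lam k
            * Complex.normSq (B i k k) := by
          intro i
          rw [hdiagc i k, Complex.normSq_mul, Complex.normSq_ofReal]
        rw [Finset.sum_congr rfl fun i _ => h1 i, ← Finset.mul_sum, ← pow_two]
      have hQ : ∑ i, Complex.normSq (∑ k, c i (k, k)) = F := by
        refine Finset.sum_congr rfl fun i _ => ?_
        rw [Finset.sum_congr rfl fun k _ => hdiagc i k]
      rw [Finset.sum_sub_distrib, Finset.sum_add_distrib, hP, hQ, hR]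
      ring
    have h4 : (0 : ℝ) < 4 ^ d := by positivity
    rw [heval] at hθsum
    exact le_of_mul_le_mul_left hθsum h4
  have hne : (Finset.univ : Finset (Fin d)).Nonempty := by
    by_contra h
    rw [Finset.not_nonempty_iff_eq_empty] at h
    rw [h, Finset.sum_empty] at hsum1
    norm_num at hsum1
  obtain ⟨k0, _, hk0⟩ := Finset.exists_max_image Finset.univ lam hne
  have hk0' : ∀ k, lam k ≤ lam k0 := fun k => hk0 k (Finset.mem_univ k)
  have hmu0 : 0 < lam k0 := by
    rcases lt_or_ge 0 (lam k0) with h | h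
    · exact h
    · exfalso
      have : ∑ k, lam k ≤ 0 := Finset.sum_nonpos fun k _ => le_trans (hk0' k) h
      linarith
  have hmu1 : lam k0 ≤ 1 := by
    rw [← hsum1]
    exact Finset.single_le_sum (fun k _ => hlam0 k) (Finset.mem_univ k0)
  have hη : 0 ≤ η := by
    have h1 := hdiag k0 (ne_of_gt hmu0)
    have h2 : X k0 k0 ≤ 1 := by
      rw [← hXcol k0]
      exact Finset.single_le_sum (fun k _ => hXnn k k0) (Finset.mem_univ k0)
    linarith
  have hT : (∑ k, ∑ l, lam k * lam l * X k l) - (∑ k, lam k ^ 2 * X k k) ≤ η / 2 := by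
    set E : Fin d → ℝ := fun l => ∑ k ∈ Finset.univ.erase l, lam k * X k l with hEdef
    have hEnn : ∀ l, 0 ≤ E l := fun l =>
      Finset.sum_nonneg fun k _ => mul_nonneg (hlam0 k) (hXnn k l)
    have hmain : (∑ k, ∑ l, lam k * lam l * X k l) - (∑ k, lam k ^ 2 * X k k)
        = ∑ l, lam l * E l := by
      rw [Finset.sum_comm]
      have h1 : ∀ l, ∑ k, lam k * lam l * X k l = lam l ^ 2 * X l l + lam l * E l := by
        intro l
        rw [← Finset.add_sum_erase _ _ (Finset.mem_univ l), hEdef]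
        simp only [Finset.mul_sum]
        congr 1
        · ring
        · refine Finset.sum_congr rfl fun k _ => ?_
          ring
      rw [Finset.sum_congr rfl fun l _ => h1 l, Finset.sum_add_distrib]
      ring
    have hE : ∀ l (cc : ℝ), 0 ≤ cc → (∀ k, k ≠ l → lam k ≤ cc) → lam l ≠ 0 →
        E l ≤ cc * η := by
      intro l cc hcc hbound hl
      have h1 : E l ≤ cc * ∑ k ∈ Finset.univ.erase l, X k l := by
        rw [Finset.mul_sum]
        refine Finset.sum_le_sum fun k hk => ?_
        exact mul_le_mul_of_nonneg_right (hbound k (Finset.ne_of_mem_erase hk)) (hXnn k l)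
      have h2 : ∑ k ∈ Finset.univ.erase l, X k l = 1 - X l l := by
        have h3 := Finset.add_sum_erase Finset.univ (fun k => X k l) (Finset.mem_univ l)
        rw [hXcol l] at h3
        linarith
      have h3 : 1 - X l l ≤ η := by have := hdiag l hl; linarith
      calc E l ≤ cc * (1 - X l l) := h2 ▸ h1
        _ ≤ cc * η := mul_le_mul_of_nonneg_left h3 hcc
    have hpair : ∀ k, k ≠ k0 → lam k ≤ 1 - lam k0 := by
      intro k hk
      have h1 := Finset.add_sum_erase Finset.univ lam (Finset.mem_univ k0)
      rw [hsum1] at h1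
      have h2 : lam k ≤ ∑ j ∈ Finset.univ.erase k0, lam j :=
        Finset.single_le_sum (fun j _ => hlam0 j)
          (Finset.mem_erase.mpr ⟨hk, Finset.mem_univ k⟩)
      linarith
    have hb1 : lam k0 * E k0 ≤ lam k0 * ((1 - lam k0) * η) :=
      mul_le_mul_of_nonneg_left
        (hE k0 (1 - lam k0) (by linarith) hpair (ne_of_gt hmu0)) (hlam0 k0)
    have hsumerase : ∑ l ∈ Finset.univ.erase k0, lam l = 1 - lam k0 := by
      have h1 := Finset.add_sum_erase Finset.univ lam (Finset.mem_univ k0)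
      rw [hsum1] at h1
      linarith
    have hb2 : ∑ l ∈ Finset.univ.erase k0, lam l * E l ≤ (1 - lam k0) * (lam k0 * η) := by
      calc ∑ l ∈ Finset.univ.erase k0, lam l * E l
          ≤ ∑ l ∈ Finset.univ.erase k0, lam l * (lam k0 * η) := by
            refine Finset.sum_le_sum fun l _ => ?_
            by_cases hl0 : lam l = 0
            · rw [hl0, zero_mul, zero_mul]
            · exact mul_le_mul_of_nonneg_left
                (hE l (lam k0) (le_of_lt hmu0) (fun k _ => hk0' k) hl0) (hlam0 l)
        _ = (1 - lam k0) * (lam k0 * η) := by rw [← Finset.sum_mul, hsumerase]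
    have hsplit : ∑ l, lam l * E l = lam k0 * E k0 + ∑ l ∈ Finset.univ.erase k0, lam l * E l :=
      (Finset.add_sum_erase _ _ (Finset.mem_univ k0)).symm
    rw [hmain, hsplit]
    nlinarith [sq_nonneg (1 - 2 * lam k0), hη, hmu0, hmu1]
  linarith
end Aux
end

section
/- Given completely positive maps A (trace-preserving) and E (trace-nonincreasing) and a density operator ρ, there exist operator decompositions {Aᵢ} of A and {Eⱼ} of E such that F_e(ρ, A∘E) ≤ |tr(A₁E₁ρ)|² / tr(E₁ρE₁†). -/
/-!
With `λⱼ = tr(EⱼρEⱼ†)` (a probability vector) and `sⱼ = Σᵢ |tr(AᵢEⱼρ)|²`, we have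
`F_e = Σⱼ sⱼ`, and `sⱼ = 0` whenever `λⱼ = 0` because then `Eⱼρ = 0`. Averaging over the support
of `λ` gives an index `j` with `λⱼ > 0` and `λⱼ F_e ≤ sⱼ`. Relabel `E` so that `Eⱼ` comes first,
and mix `A` by a unitary whose first row is `conj(v)/‖v‖` for `vᵢ = tr(AᵢEⱼρ)`: the new first
Kraus operator carries all of `sⱼ`, i.e. `|tr(A'₁Eⱼρ)|² = sⱼ`.
-/

open Matrix

theorem exists_pos_mul_sum_le_of_sum_eq_one {ι R : Type*} [Fintype ι] [CommRing R]
    [LinearOrder R] [IsStrictOrderedRing R] (w s : ι → R) (hw : ∀ j, 0 ≤ w j)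
    (hw₁ : ∑ j, w j = 1) (hs : ∀ j, w j = 0 → s j = 0) :
    ∃ j, 0 < w j ∧ w j * ∑ k, s k ≤ s j := by
  classical
  set P := Finset.univ.filter (fun j => 0 < w j)
  have hoff : ∀ j ∉ P, w j = 0 := fun j hj =>
    le_antisymm (not_lt.mp (by simpa [P] using hj)) (hw j)
  have hwP : ∑ j ∈ P, w j = 1 := by
    rw [Finset.sum_subset P.subset_univ fun j _ hj => hoff j hj, hw₁]
  have hsP : ∑ j ∈ P, s j = ∑ k, s k :=
    Finset.sum_subset P.subset_univ fun j _ hj => hs j (hoff j hj)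
  obtain ⟨j, hjP, hj⟩ := Finset.exists_le_of_sum_le (f := fun j => w j * ∑ k, s k) (g := s)
    (Finset.nonempty_of_sum_ne_zero (hwP ▸ one_ne_zero))
    (by rw [← Finset.sum_mul, hwP, one_mul, hsP])
  exact ⟨j, (Finset.mem_filter.mp hjP).2, hj⟩

theorem sum_mix_mul_mul_conjTranspose_of_conjTranspose_mul_self_eq_one {ι m n R : Type*}
    [Fintype ι] [DecidableEq ι] [Fintype n] [CommRing R] [StarRing R] (M : Matrix ι ι R)
    (hM : Mᴴ * M = 1) (A : ι → Matrix m n R) (X : Matrix n n R) :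
    ∑ i, (∑ k, M i k • A k) * X * (∑ l, M i l • A l)ᴴ = ∑ k, A k * X * (A k)ᴴ := by
  have hexpand : ∀ i, (∑ k, M i k • A k) * X * (∑ l, M i l • A l)ᴴ
      = ∑ l, ∑ k, (star (M i l) * M i k) • (A k * X * (A l)ᴴ) := fun i => by
    simp only [conjTranspose_sum, conjTranspose_smul, Matrix.sum_mul, Matrix.mul_sum,
      Matrix.smul_mul, Matrix.mul_smul, Finset.smul_sum, smul_smul]
  have hcoeff : ∀ k l, ∑ i, star (M i l) * M i k = (1 : Matrix ι ι R) l k := fun k l => by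
    rw [← hM]; rfl
  rw [Finset.sum_congr rfl fun i _ => hexpand i, Finset.sum_comm]
  refine Finset.sum_congr rfl fun l _ => ?_
  rw [Finset.sum_comm]
  simp only [← Finset.sum_smul, hcoeff, one_apply, ite_smul, one_smul, zero_smul,
    Finset.sum_ite_eq, Finset.mem_univ, if_true]

open scoped MatrixOrder ComplexOrder in
theorem Matrix.PosSemidef.mul_eq_zero_of_re_trace_mul_mul_conjTranspose_eq_zero
    {m n 𝕜 : Type*} [Fintype m] [Fintype n] [RCLike 𝕜] {ρ : Matrix n n 𝕜} (hρ : ρ.PosSemidef)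
    {E : Matrix m n 𝕜} (h : RCLike.re (E * ρ * Eᴴ).trace = 0) : E * ρ = 0 := by
  classical
  obtain ⟨B, rfl⟩ := CStarAlgebra.nonneg_iff_eq_star_mul_self.mp hρ.nonneg
  rw [star_eq_conjTranspose] at h ⊢
  have hfactor : E * (Bᴴ * B) * Eᴴ = E * Bᴴ * (E * Bᴴ)ᴴ := by
    simp only [conjTranspose_mul, conjTranspose_conjTranspose, Matrix.mul_assoc]
  rw [hfactor] at h
  have him := (RCLike.nonneg_iff.mp (posSemidef_self_mul_conjTranspose (E * Bᴴ)).trace_nonneg).2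
  have htr : (E * Bᴴ * (E * Bᴴ)ᴴ).trace = 0 :=
    RCLike.ext (h.trans (map_zero _).symm) (him.trans (map_zero _).symm)
  rw [← Matrix.mul_assoc, trace_mul_conjTranspose_self_eq_zero_iff.mp htr, Matrix.zero_mul]

theorem exists_mem_unitaryGroup_norm_mulVec_apply_sq_eq {ι 𝕜 : Type*} [Fintype ι]
    [DecidableEq ι] [RCLike 𝕜] (v : ι → 𝕜) (i₀ : ι) :
    ∃ M ∈ unitaryGroup ι 𝕜, ‖(M *ᵥ v) i₀‖ ^ 2 = ∑ k, ‖v k‖ ^ 2 := by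
  set w : EuclideanSpace 𝕜 ι := WithLp.toLp 2 v
  rcases eq_or_ne w 0 with hw | hw
  · refine ⟨1, one_mem _, ?_⟩
    have hv : v = 0 := congrArg WithLp.ofLp hw
    simp [hv]
  have hunit : Orthonormal 𝕜 (({i₀} : Set ι).domRestrict fun _ => (‖w‖⁻¹ : 𝕜) • w) :=
    ⟨fun _ => norm_smul_inv_norm hw, fun i j hij => absurd (Subsingleton.elim i j) hij⟩
  obtain ⟨b, hb⟩ := hunit.exists_orthonormalBasis_extension_of_card_eq (by simp)
  set U := (EuclideanSpace.basisFun ι 𝕜).toBasis.toMatrix b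
  refine ⟨Uᴴ, Unitary.star_mem
    ((EuclideanSpace.basisFun ι 𝕜).toMatrix_orthonormalBasis_mem_unitary b), ?_⟩
  have hcoord : (Uᴴ *ᵥ v) i₀ = inner 𝕜 (b i₀) w := by
    simp [U, mulVec, dotProduct, Module.Basis.toMatrix_apply, PiLp.inner_apply, w, mul_comm]
  have hinner : inner 𝕜 (b i₀) w = (‖w‖ : 𝕜) := by
    rw [hb i₀ rfl, inner_smul_left, inner_self_eq_norm_sq_to_K, map_inv₀, RCLike.conj_ofReal]
    field_simp
  rw [hcoord, hinner, RCLike.norm_ofReal, abs_norm, EuclideanSpace.norm_sq_eq]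

open scoped ComplexOrder in
theorem stmt_17_general {d p q : ℕ}
    (A : Fin (p + 1) → Matrix (Fin d) (Fin d) ℂ)
    (E : Fin (q + 1) → Matrix (Fin d) (Fin d) ℂ)
    (ρ : Matrix (Fin d) (Fin d) ℂ) (hρ : ρ.PosSemidef)
    (hEρ : (∑ j, E j * ρ * (E j)ᴴ).trace = 1) :
    ∃ (A' : Fin (p + 1) → Matrix (Fin d) (Fin d) ℂ)
      (E' : Fin (q + 1) → Matrix (Fin d) (Fin d) ℂ),
      (∀ X, ∑ i, A' i * X * (A' i)ᴴ = ∑ i, A i * X * (A i)ᴴ) ∧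
      (∀ X, ∑ j, E' j * X * (E' j)ᴴ = ∑ j, E j * X * (E j)ᴴ) ∧
      ∑ i, ∑ j, ‖(A i * E j * ρ).trace‖ ^ 2 ≤
        ‖(A' 0 * E' 0 * ρ).trace‖ ^ 2 / ((E' 0 * ρ * (E' 0)ᴴ).trace).re := by
  set weight : Fin (q + 1) → ℝ := fun j => ((E j * ρ * (E j)ᴴ).trace).re
  set overlap : Fin (p + 1) → Fin (q + 1) → ℂ := fun i j => (A i * E j * ρ).trace
  obtain ⟨j₀, hpos, hle⟩ := exists_pos_mul_sum_le_of_sum_eq_one weight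
    (fun j => ∑ i, ‖overlap i j‖ ^ 2)
    (fun j => (RCLike.nonneg_iff.mp (hρ.mul_mul_conjTranspose_same (E j)).trace_nonneg).1)
    (by simp [weight, ← Complex.re_sum, ← trace_sum, hEρ])
    (fun j hj => by
      simp [overlap, Matrix.mul_assoc, hρ.mul_eq_zero_of_re_trace_mul_mul_conjTranspose_eq_zero hj])
  obtain ⟨M, hM, hMv⟩ := exists_mem_unitaryGroup_norm_mulVec_apply_sq_eq (overlap · j₀) 0
  refine ⟨fun i => ∑ k, M i k • A k, E ∘ Equiv.swap 0 j₀,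
    sum_mix_mul_mul_conjTranspose_of_conjTranspose_mul_self_eq_one M
      (mem_unitaryGroup_iff'.mp hM) A,
    fun X => Fintype.sum_equiv _ _ _ fun _ => rfl, ?_⟩
  have htrace : ((∑ k, M 0 k • A k) * E j₀ * ρ).trace = (M *ᵥ (overlap · j₀)) 0 := by
    simp [Matrix.sum_mul, trace_sum, mulVec, dotProduct, overlap]
  have hE₀ : (E ∘ Equiv.swap 0 j₀) 0 = E j₀ := by simp
  rw [Finset.sum_comm, hE₀, htrace, hMv, le_div_iff₀ hpos, mul_comm]
  exact hle

open scoped ComplexOrder in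
/-- Given a trace-preserving completely positive map `A` and a trace-nonincreasing
completely positive map `E` with `tr(E(ρ)) = 1` for a density operator `ρ`, there exist
operator decompositions `{A'ᵢ}` of `A` and `{E'ⱼ}` of `E` such that
`F_e(ρ, A∘E) ≤ |tr(A'₁E'₁ρ)|² / tr(E'₁ρE'₁ᴴ)`. -/
theorem stmt_17 {d p q : ℕ}
    (A : Fin (p + 1) → Matrix (Fin d) (Fin d) ℂ)
    (E : Fin (q + 1) → Matrix (Fin d) (Fin d) ℂ)
    (hA : ∑ i, (A i)ᴴ * A i = 1)
    (hE : (1 - ∑ j, (E j)ᴴ * E j).PosSemidef)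
    (ρ : Matrix (Fin d) (Fin d) ℂ) (hρ : ρ.PosSemidef) (htr : ρ.trace = 1)
    (hEρ : (∑ j, E j * ρ * (E j)ᴴ).trace = 1) :
    ∃ (A' : Fin (p + 1) → Matrix (Fin d) (Fin d) ℂ)
      (E' : Fin (q + 1) → Matrix (Fin d) (Fin d) ℂ),
      (∀ X, ∑ i, A' i * X * (A' i)ᴴ = ∑ i, A i * X * (A i)ᴴ) ∧
      (∀ X, ∑ j, E' j * X * (E' j)ᴴ = ∑ j, E j * X * (E j)ᴴ) ∧
      ∑ i, ∑ j, ‖(A i * E j * ρ).trace‖ ^ 2 ≤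
        ‖(A' 0 * E' 0 * ρ).trace‖ ^ 2 / ((E' 0 * ρ * (E' 0)ᴴ).trace).re :=
  stmt_17_general A E ρ hρ hEρ
end

section
/- Let E : S → C and A : C → S be linear operators between finite-dimensional Hilbert spaces with dim S ≥ dim C, ρ a density operator on S with |tr(AEρ)|² ≥ 1 - η, A†A ≤ I, and tr(EρE†) = 1. Then there exists a maximal partial isometry W : S → C (W W† = I_C) such that |tr(AWρ)|² ≥ 1 - 2η. -/
/-!
Let `P = √(A†A)`, so `0 ≤ P ≤ 1`, and take the polar decomposition `A = U P` with `U†U = 1`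
(possible because `dim C ≤ dim S`); put `W = U†`, so that `A W = U P U†`.  Cauchy–Schwarz for the
positive sesquilinear form `(X, Y) ↦ tr(X† P Y ρ)` gives
`|tr(AEρ)|² = |tr(U P E ρ)|² ≤ |tr(U P U† ρ)| · tr(P EρE†) ≤ |tr(AWρ)|`,
because `P ≤ 1` and `tr(EρE†) = 1`.  Hence `|tr(AWρ)| ≥ 1 - η`, and `(1 - η)² ≥ 1 - 2η`.
-/

open Module Matrix
open scoped ComplexOrder MatrixOrder

section Orthonormal

variable {𝕜 E : Type*} [RCLike 𝕜] [NormedAddCommGroup E] [InnerProductSpace 𝕜 E]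
  [FiniteDimensional 𝕜 E] {ι : Type*} [Fintype ι]

theorem Orthonormal.exists_orthonormal_extension_of_card_le
    (hcard : Fintype.card ι ≤ finrank 𝕜 E) {v : ι → E} {s : Set ι}
    (hv : Orthonormal 𝕜 (s.domRestrict v)) :
    ∃ u : ι → E, Orthonormal 𝕜 u ∧ ∀ i ∈ s, u i = v i := by
  -- pad `ι` to an index type of cardinality `finrank 𝕜 E`
  let e := Equiv.Set.image (Sum.inl : ι → ι ⊕ Fin (finrank 𝕜 E - Fintype.card ι)) s
    Sum.inl_injective
  have hv' : Orthonormal 𝕜 ((Sum.inl '' s).domRestrict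
      (Sum.elim v (0 : Fin (finrank 𝕜 E - Fintype.card ι) → E))) := by
    convert hv.comp _ e.symm.injective
    ext x
    obtain ⟨y, rfl⟩ := e.surjective x
    simp [e]
  obtain ⟨b, hb⟩ := hv'.exists_orthonormalBasis_extension_of_card_eq
    (by simp only [Fintype.card_sum, Fintype.card_fin]; omega)
  exact ⟨b ∘ Sum.inl, b.orthonormal.comp _ Sum.inl_injective,
    fun i hi => hb _ (Set.mem_image_of_mem _ hi)⟩

theorem exists_orthonormal_smul_eq_of_pairwise_inner_eq_zero
    (hcard : Fintype.card ι ≤ finrank 𝕜 E) {w : ι → E}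
    (hw : Pairwise fun i j => inner 𝕜 (w i) (w j) = 0) :
    ∃ u : ι → E, Orthonormal 𝕜 u ∧ ∀ i, w i = (‖w i‖ : 𝕜) • u i := by
  let v i := (‖w i‖⁻¹ : 𝕜) • w i
  have hv : Orthonormal 𝕜 ({i | w i ≠ 0}.domRestrict v) := by
    refine ⟨fun ⟨i, hi⟩ => norm_smul_inv_norm hi, fun i j hij => ?_⟩
    simp [v, inner_smul_left, inner_smul_right, hw (Subtype.coe_ne_coe.mpr hij)]
  obtain ⟨u, hu, huv⟩ := hv.exists_orthonormal_extension_of_card_le hcard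
  refine ⟨u, hu, fun i => ?_⟩
  by_cases hi : w i = 0
  · simp [hi]
  · rw [huv i hi, smul_smul, mul_inv_cancel₀ (by simpa using hi), one_smul]

end Orthonormal

namespace Matrix

variable {𝕜 : Type*} [RCLike 𝕜] {m n : Type*} [Fintype m]

theorem conjTranspose_mul_apply_eq_inner (M N : Matrix m n 𝕜) (k l : n) :
    (Mᴴ * N) k l = inner 𝕜 (WithLp.toLp 2 (Mᵀ k)) (WithLp.toLp 2 (Nᵀ l)) := by
  simp [mul_apply, EuclideanSpace.inner_eq_star_dotProduct, dotProduct, mul_comm]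

variable [Fintype n]

theorem norm_trace_conjTranspose_mul_sq_le (X Y : Matrix m n 𝕜) :
    ‖(Xᴴ * Y).trace‖ ^ 2 ≤ ‖(Xᴴ * X).trace‖ * ‖(Yᴴ * Y).trace‖ := by
  let flatten (M : Matrix m n 𝕜) : EuclideanSpace 𝕜 (m × n) :=
    WithLp.toLp 2 fun p => M p.1 p.2
  have trace_eq_inner (M N : Matrix m n 𝕜) :
      (Mᴴ * N).trace = inner 𝕜 (flatten M) (flatten N) := by
    simp [flatten, trace, mul_apply, EuclideanSpace.inner_eq_star_dotProduct, dotProduct,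
      Fintype.sum_prod_type, Finset.sum_comm (γ := m), mul_comm]
  simp only [trace_eq_inner, inner_self_eq_norm_sq_to_K, norm_pow, RCLike.norm_ofReal,
    abs_norm]
  rw [← mul_pow]
  exact pow_le_pow_left₀ (norm_nonneg _) (norm_inner_le_norm _ _) 2

theorem PosSemidef.trace_mul_nonneg {M N : Matrix n n 𝕜} (hM : M.PosSemidef)
    (hN : N.PosSemidef) : 0 ≤ (M * N).trace := by
  classical
  obtain ⟨B, rfl⟩ := CStarAlgebra.nonneg_iff_eq_star_mul_self.mp hM.nonneg
  rw [Matrix.mul_assoc, trace_mul_comm, Matrix.mul_assoc]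
  simpa [Matrix.mul_assoc, star_eq_conjTranspose] using
    (hN.mul_mul_conjTranspose_same B).trace_nonneg

theorem PosSemidef.norm_trace_mul_mul_mul_sq_le {P : Matrix n n 𝕜} {ρ : Matrix m m 𝕜}
    (hP : P.PosSemidef) (hρ : ρ.PosSemidef) (F : Matrix m n 𝕜) (G : Matrix n m 𝕜) :
    ‖(F * P * G * ρ).trace‖ ^ 2 ≤ ‖(F * P * Fᴴ * ρ).trace‖ * ‖(Gᴴ * P * G * ρ).trace‖ := by
  classical
  obtain ⟨B, rfl⟩ := CStarAlgebra.nonneg_iff_eq_star_mul_self.mp hP.nonneg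
  obtain ⟨C, rfl⟩ := CStarAlgebra.nonneg_iff_eq_star_mul_self.mp hρ.nonneg
  have := norm_trace_conjTranspose_mul_sq_le (B * Fᴴ * Cᴴ) (B * G * Cᴴ)
  simp only [star_eq_conjTranspose, conjTranspose_mul, conjTranspose_conjTranspose,
    Matrix.mul_assoc] at this ⊢
  simpa only [trace_mul_comm C, Matrix.mul_assoc] using this

variable [DecidableEq n]

theorem exists_isometry_mul_diagonal_eq (hcard : Fintype.card n ≤ Fintype.card m)
    {N : Matrix m n 𝕜} {d : n → ℝ} (hd : ∀ k, 0 ≤ d k)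
    (hN : Nᴴ * N = diagonal (fun k => (d k : 𝕜)) * diagonal (fun k => (d k : 𝕜))) :
    ∃ U : Matrix m n 𝕜, Uᴴ * U = 1 ∧ N = U * diagonal (fun k => (d k : 𝕜)) := by
  have hinner k l : inner 𝕜 (WithLp.toLp 2 (Nᵀ k)) (WithLp.toLp 2 (Nᵀ l)) =
      if k = l then ((d k ^ 2 : ℝ) : 𝕜) else 0 := by
    rw [← conjTranspose_mul_apply_eq_inner, hN, diagonal_mul_diagonal, diagonal_apply]
    simp [sq]
  obtain ⟨u, hu, hNu⟩ := exists_orthonormal_smul_eq_of_pairwise_inner_eq_zero (𝕜 := 𝕜)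
    (w := fun k => WithLp.toLp 2 (Nᵀ k)) (by simpa using hcard)
    fun k l hkl => (hinner k l).trans (if_neg hkl)
  have hnorm k : ‖WithLp.toLp 2 (Nᵀ k)‖ = d k := by
    have h := inner_self_eq_norm_sq_to_K (𝕜 := 𝕜) (WithLp.toLp 2 (Nᵀ k))
    rw [hinner, if_pos rfl, ← RCLike.ofReal_pow, RCLike.ofReal_inj] at h
    exact (sq_eq_sq₀ (norm_nonneg _) (hd k)).1 h.symm
  set U : Matrix m n 𝕜 := of fun i k => u k i
  refine ⟨U, ?_, ?_⟩
  · ext k l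
    rw [conjTranspose_mul_apply_eq_inner]
    exact (orthonormal_iff_ite.1 hu k l).trans one_apply.symm
  · refine Matrix.ext fun i k => ?_
    have := congrArg (· i) (hNu k)
    simp only [hnorm] at this
    rw [mul_diagonal]
    simpa [U, RCLike.real_smul_eq_coe_mul, mul_comm] using this

theorem PosSemidef.exists_isometry_mul_eq (hcard : Fintype.card n ≤ Fintype.card m)
    {A : Matrix m n 𝕜} {P : Matrix n n 𝕜} (hP : P.PosSemidef) (hPA : P * P = Aᴴ * A) :
    ∃ U : Matrix m n 𝕜, Uᴴ * U = 1 ∧ A = U * P := by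
  set V : Matrix n n 𝕜 := ↑hP.1.eigenvectorUnitary
  set d := hP.1.eigenvalues
  have hd : ∀ k, 0 ≤ d k := hP.eigenvalues_nonneg
  have hVV : Vᴴ * V = 1 := Unitary.coe_star_mul_self hP.1.eigenvectorUnitary
  have hVV' : V * Vᴴ = 1 := Unitary.coe_mul_star_self hP.1.eigenvectorUnitary
  have hP_eq : P = V * diagonal (fun k => (d k : 𝕜)) * Vᴴ := hP.1.spectral_theorem
  clear_value V d
  subst hP_eq
  -- the columns of `A * V` are orthogonal, with norms the eigenvalues `d` of `P`
  obtain ⟨U, hU, hAV⟩ := exists_isometry_mul_diagonal_eq hcard hd (N := A * V) <| by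
    rw [conjTranspose_mul, Matrix.mul_assoc, ← Matrix.mul_assoc Aᴴ, ← hPA]
    simp only [Matrix.mul_assoc, hVV, Matrix.mul_one, ← Matrix.mul_assoc Vᴴ V, Matrix.one_mul]
  refine ⟨U * Vᴴ, ?_, ?_⟩
  · rw [conjTranspose_mul, conjTranspose_conjTranspose, Matrix.mul_assoc,
      ← Matrix.mul_assoc Uᴴ, hU, Matrix.one_mul, hVV']
  · calc A = A * V * Vᴴ := by rw [Matrix.mul_assoc, hVV', Matrix.mul_one]
      _ = _ := by
        rw [hAV]
        simp only [Matrix.mul_assoc, ← Matrix.mul_assoc Vᴴ V, hVV, Matrix.one_mul]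

theorem IsHermitian.posSemidef_one_sub_of_posSemidef_one_sub_mul_self {P : Matrix n n 𝕜}
    (hP : P.IsHermitian) (h : (1 - P * P).PosSemidef) : (1 - P).PosSemidef := by
  have hsum : (2 : ℝ) • (1 - P) = (1 - P * P) + (1 - P)ᴴ * (1 - P) := by
    rw [conjTranspose_sub, conjTranspose_one, hP.eq, two_smul]
    noncomm_ring
  have := (h.add (posSemidef_conjTranspose_mul_self (1 - P))).smul (a := (2 : ℝ)⁻¹)
    (by norm_num)
  rwa [← hsum, smul_smul, inv_mul_cancel₀ two_ne_zero, one_smul] at this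

theorem PosSemidef.norm_trace_mul_le {P M : Matrix n n 𝕜} (hP : P.PosSemidef)
    (hP1 : (1 - P).PosSemidef) (hM : M.PosSemidef) : ‖(P * M).trace‖ ≤ ‖M.trace‖ := by
  have h0 := hP.trace_mul_nonneg hM
  have h1 := hP1.trace_mul_nonneg hM
  rw [Matrix.sub_mul, Matrix.one_mul, trace_sub, sub_nonneg] at h1
  rw [← RCLike.ofReal_le_ofReal (K := 𝕜), RCLike.norm_of_nonneg' h0,
    RCLike.norm_of_nonneg' (h0.trans h1)]
  exact h1

end Matrix

theorem one_sub_two_mul_le_sq {a b η : ℝ} (ha : 0 ≤ a) (hb : b ≤ 1) (h : 1 - η ≤ a * b) :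
    1 - 2 * η ≤ a ^ 2 := by
  nlinarith [mul_le_mul_of_nonneg_left hb ha, sq_nonneg (a - (1 - η)), sq_nonneg η]

open scoped ComplexOrder in
theorem stmt_18_general {s c : ℕ} (hdim : c ≤ s)
    (E : Matrix (Fin c) (Fin s) ℂ) (A : Matrix (Fin s) (Fin c) ℂ)
    (ρ : Matrix (Fin s) (Fin s) ℂ) (hρ : ρ.PosSemidef)
    (η : ℝ)
    (hAE : 1 - η ≤ ‖(A * E * ρ).trace‖ ^ 2)
    (hA : (1 - Aᴴ * A).PosSemidef)
    (hE : (E * ρ * Eᴴ).trace = 1) :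
    ∃ W : Matrix (Fin c) (Fin s) ℂ, W * Wᴴ = 1 ∧ 1 - 2 * η ≤ ‖(A * W * ρ).trace‖ ^ 2 := by
  set P := CFC.sqrt (Aᴴ * A)
  have hP : P.PosSemidef := (CFC.sqrt_nonneg _).posSemidef
  have hPP : P * P = Aᴴ * A :=
    CFC.sqrt_mul_sqrt_self _ (posSemidef_conjTranspose_mul_self A).nonneg
  have hP1 : (1 - P).PosSemidef :=
    hP.1.posSemidef_one_sub_of_posSemidef_one_sub_mul_self (hPP ▸ hA)
  obtain ⟨U, hU, hAU⟩ := hP.exists_isometry_mul_eq (by simpa using hdim) hPP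
  refine ⟨Uᴴ, by rwa [conjTranspose_conjTranspose], ?_⟩
  have htrace_le_one : ‖(Eᴴ * P * E * ρ).trace‖ ≤ 1 := by
    calc ‖(Eᴴ * P * E * ρ).trace‖ = ‖(P * (E * ρ * Eᴴ)).trace‖ := by
          rw [Matrix.mul_assoc, Matrix.mul_assoc, trace_mul_comm]
          simp only [Matrix.mul_assoc]
      _ ≤ ‖(E * ρ * Eᴴ).trace‖ :=
          hP.norm_trace_mul_le hP1 (hρ.mul_mul_conjTranspose_same E)
      _ = 1 := by simp [hE]
  rw [hAU] at hAE ⊢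
  exact one_sub_two_mul_le_sq (norm_nonneg _) htrace_le_one
    (hAE.trans (hP.norm_trace_mul_mul_mul_sq_le hρ U E))

open scoped ComplexOrder in
/-- Let `E : S → C` and `A : C → S` be linear operators between finite-dimensional
Hilbert spaces with `dim S ≥ dim C`, `ρ` a density operator on `S` with
`|tr(AEρ)|² ≥ 1 - η`, `A†A ≤ I`, and `tr(EρE†) = 1`.  Then there is a maximal partial
isometry `W : S → C` (`W Wᴴ = I_C`) with `|tr(AWρ)|² ≥ 1 - 2η`. -/
theorem stmt_18 {s c : ℕ} (hdim : c ≤ s)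
    (E : Matrix (Fin c) (Fin s) ℂ) (A : Matrix (Fin s) (Fin c) ℂ)
    (ρ : Matrix (Fin s) (Fin s) ℂ) (hρ : ρ.PosSemidef) (htr : ρ.trace = 1)
    (η : ℝ)
    (hAE : 1 - η ≤ ‖(A * E * ρ).trace‖ ^ 2)
    (hA : (1 - Aᴴ * A).PosSemidef)
    (hE : (E * ρ * Eᴴ).trace = 1) :
    ∃ W : Matrix (Fin c) (Fin s) ℂ, W * Wᴴ = 1 ∧ 1 - 2 * η ≤ ‖(A * W * ρ).trace‖ ^ 2 :=
  stmt_18_general hdim E A ρ hρ η hAE hA hE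
end
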